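/- arXiv:2505.07638 — 11 statements merged into one kernel-verified Lean document; each statement's English description precedes it below -/
import Mathlib

section
/- Let R be a reaction network on n species. The following are equivalent: (1) R is reaction-identifiable w.r.t. its generator; (2) there exists a nonempty bounded open set U ⊆ ℝ^n_{>0} such that for all positive rate vectors κ ≠ κ' on R there exists x ∈ U with (A_{R,κ}(x), B_{R,κ}(x)) ≠ (A_{R,κ'}(x), B_{R,κ'}(x)); (3) for every source complex y of R, the family of pairs ((y'−y), (y'−y)(y'−y)^⊺) ∈ ℝ^n × Mat_n(ℝ), indexed by the reactions (y,y') ∈ R with source y, is linearly independent. -/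
open Finset

abbrev Rxn (n : ℕ) : Type := (Fin n → ℕ) × (Fin n → ℕ)

noncomputable def toR {n : ℕ} (y : Fin n → ℕ) : Fin n → ℝ := fun i => (y i : ℝ)

noncomputable def mono {n : ℕ} (x : Fin n → ℝ) (y : Fin n → ℕ) : ℝ := ∏ i, x i ^ y i

noncomputable def drift {n : ℕ} (R : Finset (Rxn n)) (κ : Rxn n → ℝ) (x : Fin n → ℝ) :
    Fin n → ℝ :=
  ∑ r ∈ R, (κ r * mono x r.1) • (toR r.2 - toR r.1)

noncomputable def diffMat {n : ℕ} (R : Finset (Rxn n)) (κ : Rxn n → ℝ) (x : Fin n → ℝ) :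
    Matrix (Fin n) (Fin n) ℝ :=
  ∑ r ∈ R, (κ r * mono x r.1) • Matrix.vecMulVec (toR r.2 - toR r.1) (toR r.2 - toR r.1)

def posOrth (n : ℕ) : Set (Fin n → ℝ) := {x | ∀ i, 0 < x i}

noncomputable def cone {n : ℕ} (R : Finset (Rxn n)) (y : Fin n → ℕ) :
    Set ((Fin n → ℝ) × Matrix (Fin n) (Fin n) ℝ) :=
  {p | ∃ α : Rxn n → ℝ,
    (∀ r ∈ R.filter (fun r => r.1 = y), 0 < α r) ∧
    p = ∑ r ∈ R.filter (fun r => r.1 = y),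
      α r • (toR r.2 - toR r.1, Matrix.vecMulVec (toR r.2 - toR r.1) (toR r.2 - toR r.1))}

/-! ### Auxiliary material -/

noncomputable abbrev vp {n : ℕ} (r : Rxn n) : (Fin n → ℝ) × Matrix (Fin n) (Fin n) ℝ :=
  (toR r.2 - toR r.1, Matrix.vecMulVec (toR r.2 - toR r.1) (toR r.2 - toR r.1))

noncomputable def Fp {n : ℕ} (R : Finset (Rxn n)) (κ : Rxn n → ℝ) (x : Fin n → ℝ) :
    (Fin n → ℝ) × Matrix (Fin n) (Fin n) ℝ :=
  ∑ r ∈ R, (κ r * mono x r.1) • vp r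

lemma sum_mk' {ι M N : Type*} [AddCommMonoid M] [AddCommMonoid N] (s : Finset ι)
    (f : ι → M) (g : ι → N) : (∑ i ∈ s, f i, ∑ i ∈ s, g i) = ∑ i ∈ s, (f i, g i) := by
  classical
  induction s using Finset.induction_on with
  | empty => simp
  | insert _ _ h ih => rw [Finset.sum_insert h, Finset.sum_insert h, Finset.sum_insert h, ← ih,
      Prod.mk_add_mk]

lemma pair_eq {n : ℕ} (R : Finset (Rxn n)) (κ : Rxn n → ℝ) (x : Fin n → ℝ) :
    (drift R κ x, diffMat R κ x) = Fp R κ x := by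
  rw [drift, diffMat, Fp, sum_mk']
  exact Finset.sum_congr rfl fun r _ => by simp [vp, Prod.smul_mk]

lemma mono_analytic {n : ℕ} (y : Fin n → ℕ) :
    AnalyticOnNhd ℝ (fun x : Fin n → ℝ => mono x y) Set.univ := by
  unfold mono
  apply Finset.analyticOnNhd_fun_prod
  intro i _
  exact ((ContinuousLinearMap.proj (R := ℝ) (φ := fun _ : Fin n => ℝ) i).analyticOnNhd
    Set.univ).pow _

/-- Monomials with distinct exponent vectors are linearly independent as functions
on any nonempty open subset of `ℝⁿ` (scalar coefficients). -/
lemma monoB {n : ℕ} {U : Set (Fin n → ℝ)} (hUo : IsOpen U) (hne : U.Nonempty)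
    (S : Finset (Fin n → ℕ)) (c : (Fin n → ℕ) → ℝ)
    (h : ∀ x ∈ U, ∑ y ∈ S, mono x y * c y = 0) :
    ∀ y ∈ S, c y = 0 := by
  classical
  have hall : ∀ x : Fin n → ℝ, ∑ y ∈ S, mono x y * c y = 0 := by
    obtain ⟨x₀, hx₀⟩ := hne
    have hg : AnalyticOnNhd ℝ (fun x : Fin n → ℝ => ∑ y ∈ S, mono x y * c y) Set.univ :=
      by simpa only [Finset.sum_fn] using Finset.analyticOnNhd_sum (f := fun y (x : Fin n → ℝ) => mono x y * c y) S fun y _ => (mono_analytic y).mul analyticOnNhd_const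
    have hev : (fun x : Fin n → ℝ => ∑ y ∈ S, mono x y * c y) =ᶠ[nhds x₀] 0 :=
      Filter.eventuallyEq_of_mem (hUo.mem_nhds hx₀) fun x hx => h x hx
    have := hg.eqOn_zero_of_preconnected_of_eventuallyEq_zero isPreconnected_univ
      (Set.mem_univ x₀) hev
    intro x
    exact this (Set.mem_univ x)
  set e := (Finsupp.equivFunOnFinite (α := Fin n) (M := ℕ)).symm with he
  set P : MvPolynomial (Fin n) ℝ := ∑ y ∈ S, MvPolynomial.monomial (e y) (c y) with hP
  have heval : ∀ x : Fin n → ℝ, MvPolynomial.eval x P = ∑ y ∈ S, mono x y * c y := by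
    intro x
    rw [hP, map_sum]
    refine Finset.sum_congr rfl fun y _ => ?_
    rw [MvPolynomial.eval_monomial, mul_comm]
    congr 1
    rw [Finsupp.prod_fintype _ _ fun i => pow_zero _]
    unfold mono
    refine Finset.prod_congr rfl fun i _ => ?_
    simp [he]
  have hP0 : P = 0 := MvPolynomial.funext fun x => by rw [heval, hall]; simp
  intro y hy
  have hco := congrArg (MvPolynomial.coeff (e y)) hP0
  rw [hP, MvPolynomial.coeff_sum] at hco
  simp only [MvPolynomial.coeff_monomial, MvPolynomial.coeff_zero] at hco
  rwa [Finset.sum_eq_single_of_mem y hy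
    (fun y' _ hne' => if_neg fun hc => hne' (e.injective hc)), if_pos rfl] at hco

/-- Vector-valued version of `monoB`. -/
lemma monoBV {n : ℕ} {U : Set (Fin n → ℝ)} (hUo : IsOpen U) (hne : U.Nonempty)
    (S : Finset (Fin n → ℕ)) (c : (Fin n → ℕ) → (Fin n → ℝ) × Matrix (Fin n) (Fin n) ℝ)
    (h : ∀ x ∈ U, ∑ y ∈ S, mono x y • c y = 0) :
    ∀ y ∈ S, c y = 0 := by
  have hsplit : ∀ x : Fin n → ℝ, ∑ y ∈ S, mono x y • c y
      = (∑ y ∈ S, mono x y • (c y).1, ∑ y ∈ S, mono x y • (c y).2) := by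
    intro x
    rw [sum_mk']
    exact Finset.sum_congr rfl fun y _ => by
      rw [← Prod.mk.eta (p := c y), Prod.smul_mk]
  have h1 : ∀ i, ∀ y ∈ S, (c y).1 i = 0 := by
    intro i
    apply monoB hUo hne
    intro x hx
    have hx0 := h x hx
    rw [hsplit x] at hx0
    have := congrFun (congrArg Prod.fst hx0) i
    simpa [Finset.sum_apply] using this
  have h2 : ∀ i j, ∀ y ∈ S, (c y).2 i j = 0 := by
    intro i j
    apply monoB hUo hne
    intro x hx
    have hx0 := h x hx
    rw [hsplit x] at hx0
    have := congrArg (fun M : Matrix (Fin n) (Fin n) ℝ => M i j) (congrArg Prod.snd hx0)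
    simpa [Matrix.sum_apply] using this
  intro y hy
  refine Prod.ext ?_ ?_
  · funext i; exact h1 i y hy
  · ext i j; exact h2 i j y hy

lemma group_eq {n : ℕ} (R : Finset (Rxn n)) (d : Rxn n → ℝ) (x : Fin n → ℝ) :
    ∑ r ∈ R, (d r * mono x r.1) • vp r
      = ∑ y ∈ R.image Prod.fst, mono x y •
          ∑ r ∈ R.filter (fun r => r.1 = y), d r • vp r := by
  classical
  rw [← Finset.sum_fiberwise_of_maps_to (g := Prod.fst)
    (fun r hr => Finset.mem_image_of_mem _ hr) (fun r => (d r * mono x r.1) • vp r)]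
  refine Finset.sum_congr rfl fun y _ => ?_
  rw [Finset.smul_sum]
  refine Finset.sum_congr rfl fun r hr => ?_
  have h1 : r.1 = y := (Finset.mem_filter.1 hr).2
  rw [smul_smul, h1, mul_comm]

/-- Condition (3) implies distinguishability on any nonempty open set. -/
lemma three_imp {n : ℕ} (R : Finset (Rxn n))
    (h3 : ∀ y : Fin n → ℕ, (∃ r ∈ R, r.1 = y) →
      LinearIndependent ℝ (fun r : {r : Rxn n // r ∈ R ∧ r.1 = y} => vp r.1))
    {U : Set (Fin n → ℝ)} (hUo : IsOpen U) (hne : U.Nonempty)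
    (κ κ' : Rxn n → ℝ) (hdiff : ∃ r ∈ R, κ r ≠ κ' r) :
    ∃ x ∈ U, Fp R κ x ≠ Fp R κ' x := by
  classical
  by_contra hcon
  push_neg at hcon
  have hzero : ∀ x ∈ U, ∑ y ∈ R.image Prod.fst, mono x y •
      (∑ r ∈ R.filter (fun r => r.1 = y), (κ r - κ' r) • vp r) = 0 := by
    intro x hx
    rw [← group_eq]
    have e1 : Fp R κ x - Fp R κ' x = 0 := sub_eq_zero.2 (hcon x hx)
    rw [Fp, Fp, ← Finset.sum_sub_distrib] at e1
    rw [← e1]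
    exact Finset.sum_congr rfl fun r _ => by rw [← sub_smul, ← sub_mul]
  have hc := monoBV hUo hne _ _ hzero
  obtain ⟨r₀, hr₀, hne₀⟩ := hdiff
  have h0 := hc r₀.1 (Finset.mem_image_of_mem _ hr₀)
  haveI : Fintype {r : Rxn n // r ∈ R ∧ r.1 = r₀.1} :=
    Fintype.subtype (R.filter fun r => r.1 = r₀.1) fun r => by simp
  have h0' : ∑ s : {r : Rxn n // r ∈ R ∧ r.1 = r₀.1}, (κ s.1 - κ' s.1) • vp s.1 = 0 :=
    (Finset.sum_subtype (p := fun r : Rxn n => r ∈ R ∧ r.1 = r₀.1)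
      (s := R.filter fun r => r.1 = r₀.1)
      (fun r => Finset.mem_filter) (fun r => (κ r - κ' r) • vp r)).symm.trans h0
  have hli := h3 r₀.1 ⟨r₀, hr₀, rfl⟩
  have := Fintype.linearIndependent_iff.1 hli (fun s => κ s.1 - κ' s.1) h0' ⟨r₀, hr₀, rfl⟩
  exact hne₀ (sub_eq_zero.1 this)

/-- Failure of condition (3) yields indistinguishable distinct positive rate vectors. -/
lemma not_three {n : ℕ} (R : Finset (Rxn n)) (y : Fin n → ℕ)
    (hy : ∃ r ∈ R, r.1 = y)
    (hdep : ¬ LinearIndependent ℝ (fun r : {r : Rxn n // r ∈ R ∧ r.1 = y} => vp r.1)) :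
    ∃ κ κ' : Rxn n → ℝ, (∀ r ∈ R, 0 < κ r) ∧ (∀ r ∈ R, 0 < κ' r) ∧
      (∃ r ∈ R, κ r ≠ κ' r) ∧ ∀ x : Fin n → ℝ, Fp R κ x = Fp R κ' x := by
  classical
  haveI : Fintype {r : Rxn n // r ∈ R ∧ r.1 = y} :=
    Fintype.subtype (R.filter fun r => r.1 = y) fun r => by simp
  obtain ⟨g, hg0, i₀, hi₀⟩ := Fintype.not_linearIndependent_iff.1 hdep
  set B : ℝ := ∑ s : {r : Rxn n // r ∈ R ∧ r.1 = y}, |g s| with hB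
  have hBnn : 0 ≤ B := Finset.sum_nonneg fun _ _ => abs_nonneg _
  have hB1 : (0:ℝ) < 1 + B := by linarith
  set g' : Rxn n → ℝ := fun r => if h : r ∈ R ∧ r.1 = y then g ⟨r, h⟩ else 0 with hg'
  have habs : ∀ r, |g' r| ≤ B := by
    intro r
    by_cases h : r ∈ R ∧ r.1 = y
    · simp only [hg', dif_pos h]
      exact Finset.single_le_sum (f := fun s : {r : Rxn n // r ∈ R ∧ r.1 = y} => |g s|)
        (fun _ _ => abs_nonneg _) (Finset.mem_univ (⟨r, h⟩ : {r : Rxn n // r ∈ R ∧ r.1 = y}))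
    · simp [hg', dif_neg h, hBnn]
  refine ⟨fun _ => 1, fun r => 1 + g' r / (1 + B), fun _ _ => one_pos, ?_, ?_, ?_⟩
  · intro r _
    have habs' : |g' r / (1 + B)| < 1 := by
      rw [abs_div, abs_of_pos hB1]
      exact (div_lt_one hB1).2 (lt_of_le_of_lt (habs r) (by linarith))
    have := neg_lt_of_abs_lt habs'
    linarith
  · refine ⟨i₀.1, i₀.2.1, ?_⟩
    simp only [hg', dif_pos i₀.2]
    intro hcontra
    have h0 : g i₀ / (1 + B) = 0 := by
      have : (1:ℝ) = 1 + g ⟨i₀.1, i₀.2⟩ / (1 + B) := hcontra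
      have h2 : g ⟨i₀.1, i₀.2⟩ / (1 + B) = 0 := by linarith
      exact h2
    rcases div_eq_zero_iff.1 h0 with h' | h'
    · exact hi₀ h'
    · linarith
  · intro x
    have key : ∑ r ∈ R, (g' r / (1 + B) * mono x r.1) • vp r = 0 := by
      rw [← Finset.sum_subset (Finset.filter_subset (fun r => r.1 = y) R)
        (by
          intro r hrR hnr
          have hn : ¬(r ∈ R ∧ r.1 = y) := fun hcc => hnr (Finset.mem_filter.2 ⟨hrR, hcc.2⟩)
          rw [hg']
          simp [dif_neg hn])]
      have hcg : ∀ r ∈ R.filter (fun r => r.1 = y),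
          (g' r / (1 + B) * mono x r.1) • vp r
            = (mono x y / (1 + B)) • (g' r • vp r) := by
        intro r hr
        have h1 : r.1 = y := (Finset.mem_filter.1 hr).2
        rw [smul_smul, h1]
        congr 1
        ring
      rw [Finset.sum_congr rfl hcg, ← Finset.smul_sum]
      have hsum0 : ∑ r ∈ R.filter (fun r => r.1 = y), g' r • vp r = 0 := by
        have hsub : ∑ r ∈ R.filter (fun r => r.1 = y), g' r • vp r
            = ∑ s : {r : Rxn n // r ∈ R ∧ r.1 = y}, g' s.1 • vp s.1 :=
          Finset.sum_subtype (p := fun r : Rxn n => r ∈ R ∧ r.1 = y)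
            (s := R.filter fun r => r.1 = y)
            (fun r => Finset.mem_filter) (fun r => g' r • vp r)
        rw [hsub]
        rw [Finset.sum_congr rfl (fun s _ => by simp only [hg', dif_pos s.2] :
          ∀ s ∈ (Finset.univ : Finset {r : Rxn n // r ∈ R ∧ r.1 = y}),
            g' s.1 • vp s.1 = g s • vp s.1)]
        exact hg0
      rw [hsum0, smul_zero]
    have hdiffz : Fp R (fun r => 1 + g' r / (1 + B)) x - Fp R (fun _ => 1) x = 0 := by
      rw [Fp, Fp, ← Finset.sum_sub_distrib, ← key]
      exact Finset.sum_congr rfl fun r _ => by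
        rw [← sub_smul, ← sub_mul, add_sub_cancel_left]
    have := sub_eq_zero.1 hdiffz
    exact this.symm

lemma posOrth_isOpen {n : ℕ} : IsOpen (posOrth n) := by
  have hEq : posOrth n = Set.pi Set.univ (fun _ : Fin n => Set.Ioi (0:ℝ)) := by
    ext x; simp [posOrth, Set.mem_pi]
  rw [hEq]
  exact isOpen_set_pi Set.finite_univ fun i _ => isOpen_Ioi

lemma one_to_three {n : ℕ} (R : Finset (Rxn n))
    (h1 : ∀ κ κ' : Rxn n → ℝ, (∀ r ∈ R, 0 < κ r) → (∀ r ∈ R, 0 < κ' r) →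
        (∃ r ∈ R, κ r ≠ κ' r) →
        ∃ x ∈ posOrth n, (drift R κ x, diffMat R κ x) ≠ (drift R κ' x, diffMat R κ' x)) :
    ∀ y : Fin n → ℕ, (∃ r ∈ R, r.1 = y) →
      LinearIndependent ℝ (fun r : {r : Rxn n // r ∈ R ∧ r.1 = y} => vp r.1) := by
  intro y hy
  by_contra hdep
  obtain ⟨κ, κ', hκ, hκ', hne', hall⟩ := not_three R y hy hdep
  obtain ⟨x, _, hxne⟩ := h1 κ κ' hκ hκ' hne'
  exact hxne (by rw [pair_eq, pair_eq, hall x])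

/-- Theorem 5.8 (Theorem `theorem1`): equivalence of (1) reaction-identifiability w.r.t. the
generator, (2) distinguishability of rates on some nonempty bounded open subset of the positive
orthant, and (3) linear independence, for every source complex, of the family
`((y'-y), (y'-y)(y'-y)ᵀ)` indexed by the reactions with that source. -/
theorem reaction_identifiable_generator_tfae {n : ℕ}
    (R : Finset (Rxn n)) (hR : ∀ r ∈ R, r.1 ≠ r.2) :
    ((∀ κ κ' : Rxn n → ℝ, (∀ r ∈ R, 0 < κ r) → (∀ r ∈ R, 0 < κ' r) →
        (∃ r ∈ R, κ r ≠ κ' r) →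
        ∃ x ∈ posOrth n, (drift R κ x, diffMat R κ x) ≠ (drift R κ' x, diffMat R κ' x))
      ↔
      (∃ U : Set (Fin n → ℝ), U.Nonempty ∧ IsOpen U ∧ Bornology.IsBounded U ∧
        U ⊆ posOrth n ∧
        ∀ κ κ' : Rxn n → ℝ, (∀ r ∈ R, 0 < κ r) → (∀ r ∈ R, 0 < κ' r) →
          (∃ r ∈ R, κ r ≠ κ' r) →
          ∃ x ∈ U, (drift R κ x, diffMat R κ x) ≠ (drift R κ' x, diffMat R κ' x)))
    ∧
    ((∀ κ κ' : Rxn n → ℝ, (∀ r ∈ R, 0 < κ r) → (∀ r ∈ R, 0 < κ' r) →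
        (∃ r ∈ R, κ r ≠ κ' r) →
        ∃ x ∈ posOrth n, (drift R κ x, diffMat R κ x) ≠ (drift R κ' x, diffMat R κ' x))
      ↔
      (∀ y : Fin n → ℕ, (∃ r ∈ R, r.1 = y) →
        LinearIndependent ℝ (fun r : {r : Rxn n // r ∈ R ∧ r.1 = y} =>
          ((toR r.1.2 - toR r.1.1,
            Matrix.vecMulVec (toR r.1.2 - toR r.1.1) (toR r.1.2 - toR r.1.1)) :
            (Fin n → ℝ) × Matrix (Fin n) (Fin n) ℝ)))) := by
  classical
  constructor
  · constructor
    · intro h1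
      have h3 := one_to_three R h1
      refine ⟨Metric.ball (fun _ => (1:ℝ)) (1/2), Metric.nonempty_ball.2 (by norm_num),
        Metric.isOpen_ball, Metric.isBounded_ball, ?_, ?_⟩
      · intro x hx i
        have hd1 := dist_le_pi_dist x (fun _ => (1:ℝ)) i
        have hd2 : dist x (fun _ => (1:ℝ)) < 1/2 := Metric.mem_ball.1 hx
        have hlt := lt_of_le_of_lt hd1 hd2
        rw [Real.dist_eq] at hlt
        have := abs_lt.1 hlt
        linarith [this.1]
      · intro κ κ' hκ hκ' hne'
        obtain ⟨x, hx, hxne⟩ := three_imp R h3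
          (U := Metric.ball (fun _ => (1:ℝ)) (1/2)) Metric.isOpen_ball
          (Metric.nonempty_ball.2 (by norm_num)) κ κ' hne'
        exact ⟨x, hx, by rw [pair_eq, pair_eq]; exact hxne⟩
    · rintro ⟨U, hne, hUo, _, hUsub, hU⟩ κ κ' hκ hκ' hne'
      obtain ⟨x, hx, hxne⟩ := hU κ κ' hκ hκ' hne'
      exact ⟨x, hUsub hx, hxne⟩
  · constructor
    · intro h1
      exact one_to_three R h1
    · intro h3 κ κ' hκ hκ' hne'
      obtain ⟨x, hx, hxne⟩ := three_imp R h3 posOrth_isOpen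
        ⟨fun _ => (1:ℝ), fun i => by norm_num⟩ κ κ' hne'
      exact ⟨x, hx, by rw [pair_eq, pair_eq]; exact hxne⟩
end

section
/- Let R and R' be reaction networks on the same n species, with positive rate vectors κ on R and κ' on R'. Then A_{R,κ}(x) = A_{R',κ'}(x) and B_{R,κ}(x) = B_{R',κ'}(x) for all x in some nonempty open subset of ℝ^n_{>0} if and only if for every complex y ∈ ℕ^n one has Σ_{(y,z)∈R} κ(y,z)(z − y) = Σ_{(y,z)∈R'} κ'(y,z)(z − y) in ℝ^n and Σ_{(y,z)∈R} κ(y,z)(z − y)(z − y)^⊺ = Σ_{(y,z)∈R'} κ'(y,z)(z − y)(z − y)^⊺ in Mat_n(ℝ), where each sum ranges over the reactions of the respective network with source y. -/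
open Finset

lemma key_monomials {n : ℕ} (Y : Finset (Fin n → ℕ)) (c : (Fin n → ℕ) → ℝ)
    (U : Set (Fin n → ℝ)) (hne : U.Nonempty) (ho : IsOpen U)
    (h : ∀ x ∈ U, ∑ y ∈ Y, c y * mono x y = 0) : ∀ y ∈ Y, c y = 0 := by
  obtain ⟨x₀, hx₀⟩ := hne
  have hf : AnalyticOnNhd ℝ (fun x : Fin n → ℝ => ∑ y ∈ Y, c y * mono x y) Set.univ := by
    apply Finset.analyticOnNhd_fun_sum
    intro y _
    exact analyticOnNhd_const.mul (mono_analytic y)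
  have hall : (fun x : Fin n → ℝ => ∑ y ∈ Y, c y * mono x y) = fun _ => 0 := by
    apply AnalyticOnNhd.eq_of_eventuallyEq hf analyticOnNhd_const (z₀ := x₀)
    filter_upwards [ho.mem_nhds hx₀] with x hx using h x hx
  set P : MvPolynomial (Fin n) ℝ :=
    ∑ y ∈ Y, MvPolynomial.monomial (Finsupp.equivFunOnFinite.symm y) (c y) with hP
  have hev : ∀ x : Fin n → ℝ, MvPolynomial.eval x P = ∑ y ∈ Y, c y * mono x y := by
    intro x
    rw [hP, map_sum]
    refine Finset.sum_congr rfl fun y _ => ?_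
    rw [MvPolynomial.eval_monomial]
    congr 1
    rw [Finsupp.prod_fintype]
    · rfl
    · intro i; simp
  have hP0 : P = 0 := by
    apply MvPolynomial.funext
    intro x
    rw [hev x]
    simpa using congrFun hall x
  intro y hy
  have := congrArg (MvPolynomial.coeff (Finsupp.equivFunOnFinite.symm y)) hP0
  rw [hP, MvPolynomial.coeff_zero] at this
  rw [MvPolynomial.coeff_sum] at this
  rw [Finset.sum_eq_single y] at this
  · simpa [MvPolynomial.coeff_monomial] using this
  · intro b hb hbne
    rw [MvPolynomial.coeff_monomial, if_neg]
    intro heq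
    exact hbne (Finsupp.equivFunOnFinite.symm.injective heq)
  · intro hy'; exact absurd hy hy'

lemma fiber_decomp {n : ℕ} {V : Type*} [AddCommGroup V] [Module ℝ V]
    (R : Finset (Rxn n)) (Y : Finset (Fin n → ℕ)) (hY : ∀ r ∈ R, r.1 ∈ Y)
    (κ : Rxn n → ℝ) (v : Rxn n → V) (x : Fin n → ℝ) :
    ∑ r ∈ R, (κ r * mono x r.1) • v r
      = ∑ y ∈ Y, mono x y • ∑ r ∈ R.filter (fun r => r.1 = y), κ r • v r := by
  rw [← Finset.sum_fiberwise_of_maps_to hY (fun r => (κ r * mono x r.1) • v r)]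
  refine Finset.sum_congr rfl fun y _ => ?_
  rw [Finset.smul_sum]
  refine Finset.sum_congr rfl fun r hr => ?_
  rw [(Finset.mem_filter.mp hr).2, mul_comm, mul_smul]


/-- Drift and diffusion matrix of two mass-action systems coincide on some nonempty open subset
of the positive orthant iff, for every complex `y`, the corresponding coefficient sums (over the
reactions with source `y`) agree both at the level of reaction vectors and of their outer
products. -/
theorem generators_eq_iff_coefficients_eq {n : ℕ} (R R' : Finset (Rxn n))
    (hR : ∀ r ∈ R, r.1 ≠ r.2) (hR' : ∀ r ∈ R', r.1 ≠ r.2)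
    (κ κ' : Rxn n → ℝ) (hκ : ∀ r ∈ R, 0 < κ r) (hκ' : ∀ r ∈ R', 0 < κ' r) :
    (∃ U : Set (Fin n → ℝ), U.Nonempty ∧ IsOpen U ∧ U ⊆ posOrth n ∧
      ∀ x ∈ U, drift R κ x = drift R' κ' x ∧ diffMat R κ x = diffMat R' κ' x)
    ↔
    (∀ y : Fin n → ℕ,
      (∑ r ∈ R.filter (fun r => r.1 = y), κ r • (toR r.2 - toR r.1)
        = ∑ r ∈ R'.filter (fun r => r.1 = y), κ' r • (toR r.2 - toR r.1)) ∧
      (∑ r ∈ R.filter (fun r => r.1 = y),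
          κ r • Matrix.vecMulVec (toR r.2 - toR r.1) (toR r.2 - toR r.1)
        = ∑ r ∈ R'.filter (fun r => r.1 = y),
          κ' r • Matrix.vecMulVec (toR r.2 - toR r.1) (toR r.2 - toR r.1))) := by
  classical
  constructor
  · rintro ⟨U, hne, ho, hsub, hU⟩ y
    set Y : Finset (Fin n → ℕ) := insert y ((R ∪ R').image Prod.fst) with hYdef
    have hYR : ∀ r ∈ R, r.1 ∈ Y := fun r hr =>
      Finset.mem_insert_of_mem (Finset.mem_image_of_mem _ (Finset.mem_union_left _ hr))
    have hYR' : ∀ r ∈ R', r.1 ∈ Y := fun r hr =>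
      Finset.mem_insert_of_mem (Finset.mem_image_of_mem _ (Finset.mem_union_right _ hr))
    have hyY : y ∈ Y := Finset.mem_insert_self _ _
    -- vector part
    have hvec : ∀ i : Fin n, ∀ z ∈ Y,
        ((∑ r ∈ R.filter (fun r => r.1 = z), κ r • (toR r.2 - toR r.1))
          - ∑ r ∈ R'.filter (fun r => r.1 = z), κ' r • (toR r.2 - toR r.1)) i = 0 := by
      intro i
      apply key_monomials Y _ U hne ho
      intro x hx
      have h1 := (hU x hx).1
      unfold drift at h1
      rw [fiber_decomp R Y hYR, fiber_decomp R' Y hYR'] at h1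
      have h2 : ((∑ z ∈ Y, mono x z • ∑ r ∈ R.filter (fun r => r.1 = z),
            κ r • (toR r.2 - toR r.1))
          - ∑ z ∈ Y, mono x z • ∑ r ∈ R'.filter (fun r => r.1 = z),
            κ' r • (toR r.2 - toR r.1)) i = 0 := by
        rw [sub_eq_zero.mpr h1]; simp
      rw [← h2]
      simp only [Pi.sub_apply, Finset.sum_apply, Pi.smul_apply, smul_eq_mul]
      rw [← Finset.sum_sub_distrib]
      exact Finset.sum_congr rfl fun z _ => by ring
    have hmat : ∀ i j : Fin n, ∀ z ∈ Y,
        ((∑ r ∈ R.filter (fun r => r.1 = z),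
            κ r • Matrix.vecMulVec (toR r.2 - toR r.1) (toR r.2 - toR r.1))
          - ∑ r ∈ R'.filter (fun r => r.1 = z),
            κ' r • Matrix.vecMulVec (toR r.2 - toR r.1) (toR r.2 - toR r.1)) i j = 0 := by
      intro i j
      apply key_monomials Y _ U hne ho
      intro x hx
      have h1 := (hU x hx).2
      unfold diffMat at h1
      rw [fiber_decomp R Y hYR, fiber_decomp R' Y hYR'] at h1
      have h2 : ((∑ z ∈ Y, mono x z • ∑ r ∈ R.filter (fun r => r.1 = z),
            κ r • Matrix.vecMulVec (toR r.2 - toR r.1) (toR r.2 - toR r.1))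
          - ∑ z ∈ Y, mono x z • ∑ r ∈ R'.filter (fun r => r.1 = z),
            κ' r • Matrix.vecMulVec (toR r.2 - toR r.1) (toR r.2 - toR r.1)) i j = 0 := by
        rw [sub_eq_zero.mpr h1]; simp
      rw [← h2]
      simp only [Matrix.sub_apply, Matrix.sum_apply, Matrix.smul_apply, smul_eq_mul]
      rw [← Finset.sum_sub_distrib]
      exact Finset.sum_congr rfl fun z _ => by ring
    constructor
    · funext i
      have := hvec i y hyY
      simpa [sub_eq_zero] using this
    · ext i j
      have := hmat i j y hyY
      simpa [sub_eq_zero] using this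
  · intro h
    refine ⟨posOrth n, ⟨fun _ => 1, fun i => one_pos⟩, ?_, le_refl _, ?_⟩
    · have : posOrth n = ⋂ i, (fun x : Fin n → ℝ => x i) ⁻¹' Set.Ioi 0 := by
        ext x; simp [posOrth]
      rw [this]
      exact isOpen_iInter_of_finite fun i => (continuous_apply i).isOpen_preimage _ isOpen_Ioi
    · intro x _
      set Y : Finset (Fin n → ℕ) := (R ∪ R').image Prod.fst with hYdef
      have hYR : ∀ r ∈ R, r.1 ∈ Y := fun r hr =>
        Finset.mem_image_of_mem _ (Finset.mem_union_left _ hr)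
      have hYR' : ∀ r ∈ R', r.1 ∈ Y := fun r hr =>
        Finset.mem_image_of_mem _ (Finset.mem_union_right _ hr)
      constructor
      · unfold drift
        rw [fiber_decomp R Y hYR, fiber_decomp R' Y hYR']
        exact Finset.sum_congr rfl fun z _ => by rw [(h z).1]
      · unfold diffMat
        rw [fiber_decomp R Y hYR, fiber_decomp R' Y hYR']
        exact Finset.sum_congr rfl fun z _ => by rw [(h z).2]
end

section
/- Let R ≠ R' be reaction networks on the same n species. Then R and R' are confoundable w.r.t. their generators if and only if R and R' have the same source complexes and for every source complex y one has Cone_R(y) ∩ Cone_{R'}(y) ≠ ∅. -/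
open Finset

/-! ### Auxiliary machinery -/

lemma poly_zero_of_posOrth : ∀ {n : ℕ} (P : MvPolynomial (Fin n) ℝ),
    (∀ x : Fin n → ℝ, (∀ i, 0 < x i) → MvPolynomial.eval x P = 0) → P = 0 := by
  intro n
  induction n with
  | zero =>
    intro P h
    exact MvPolynomial.funext (fun x => by simpa using h x (fun i => i.elim0))
  | succ n ih =>
    intro P h
    set Q := MvPolynomial.finSuccEquiv ℝ n P with hQ
    have hcoeff : ∀ (s : Fin n → ℝ), (∀ i, 0 < s i) → ∀ k,
        MvPolynomial.eval s (Q.coeff k) = 0 := by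
      intro s hs k
      have hq : Q.map (MvPolynomial.eval s) = 0 := by
        apply Polynomial.eq_zero_of_infinite_isRoot
        apply Set.Infinite.mono (s := Set.Ioi (0:ℝ)) ?_ (Set.Ioi_infinite 0)
        intro t ht
        have := h (Fin.cons t s) (fun i => Fin.cases ht hs i)
        rw [MvPolynomial.eval_eq_eval_mv_eval'] at this
        exact this
      have := congrArg (fun p => Polynomial.coeff p k) hq
      simpa [Polynomial.coeff_map] using this
    have hQ0 : Q = 0 := by
      ext k d
      have : Q.coeff k = 0 := ih _ (fun s hs => hcoeff s hs k)
      simp [this]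
    have : Q = MvPolynomial.finSuccEquiv ℝ n 0 := by rw [hQ0]; simp
    exact (MvPolynomial.finSuccEquiv ℝ n).injective this

lemma mono_indep {n : ℕ} (S : Finset (Fin n → ℕ)) (c : (Fin n → ℕ) → ℝ)
    (h : ∀ x : Fin n → ℝ, (∀ i, 0 < x i) → ∑ y ∈ S, c y * mono x y = 0) :
    ∀ y ∈ S, c y = 0 := by
  intro y₀ hy₀
  set φ : (Fin n → ℕ) ≃ (Fin n →₀ ℕ) := Finsupp.equivFunOnFinite.symm with hφ
  set P : MvPolynomial (Fin n) ℝ := ∑ y ∈ S, MvPolynomial.monomial (φ y) (c y) with hP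
  have hPeval : ∀ x : Fin n → ℝ, (∀ i, 0 < x i) → MvPolynomial.eval x P = 0 := by
    intro x hx
    rw [hP, map_sum, ← h x hx]
    apply Finset.sum_congr rfl
    intro y hy
    rw [MvPolynomial.eval_monomial]
    congr 1
    rw [Finsupp.prod_fintype]
    · apply Finset.prod_congr rfl
      intro i _
      congr 1
    · intro i; simp
  have hP0 : P = 0 := poly_zero_of_posOrth P hPeval
  have := congrArg (MvPolynomial.coeff (φ y₀)) hP0
  rw [hP] at this
  simp only [MvPolynomial.coeff_zero] at this
  rw [MvPolynomial.coeff_sum, Finset.sum_eq_single y₀] at this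
  · simpa [MvPolynomial.coeff_monomial] using this
  · intro y hy hne
    rw [MvPolynomial.coeff_monomial, if_neg (fun hc => hne (φ.injective hc))]
  · intro hc; exact absurd hy₀ hc

noncomputable def pairV {n : ℕ} (r : Rxn n) : (Fin n → ℝ) × Matrix (Fin n) (Fin n) ℝ :=
  (toR r.2 - toR r.1, Matrix.vecMulVec (toR r.2 - toR r.1) (toR r.2 - toR r.1))

noncomputable def cSum {n : ℕ} (R : Finset (Rxn n)) (κ : Rxn n → ℝ) (y : Fin n → ℕ) :
    (Fin n → ℝ) × Matrix (Fin n) (Fin n) ℝ :=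
  ∑ r ∈ R.filter (fun r => r.1 = y), κ r • pairV r

lemma group_sum {n : ℕ} (R : Finset (Rxn n)) (κ : Rxn n → ℝ)
    (T : Finset (Fin n → ℕ)) (hT : ∀ r ∈ R, r.1 ∈ T) (x : Fin n → ℝ) :
    ∑ r ∈ R, (κ r * mono x r.1) • pairV r = ∑ y ∈ T, mono x y • cSum R κ y := by
  rw [← Finset.sum_fiberwise_of_maps_to hT (fun r => (κ r * mono x r.1) • pairV r)]
  refine Finset.sum_congr rfl fun y hy => ?_
  rw [cSum, Finset.smul_sum]
  refine Finset.sum_congr rfl fun r hr => ?_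
  have h1 : r.1 = y := (Finset.mem_filter.mp hr).2
  rw [h1, smul_smul, mul_comm]

lemma drift_eq_fst {n : ℕ} (R : Finset (Rxn n)) (κ : Rxn n → ℝ) (x : Fin n → ℝ) :
    drift R κ x = (∑ r ∈ R, (κ r * mono x r.1) • pairV r).1 := by
  rw [drift, Prod.fst_sum]
  exact Finset.sum_congr rfl fun r _ => rfl

lemma diff_eq_snd {n : ℕ} (R : Finset (Rxn n)) (κ : Rxn n → ℝ) (x : Fin n → ℝ) :
    diffMat R κ x = (∑ r ∈ R, (κ r * mono x r.1) • pairV r).2 := by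
  rw [diffMat, Prod.snd_sum]
  exact Finset.sum_congr rfl fun r _ => rfl

lemma pair_indep {n : ℕ} (S : Finset (Fin n → ℕ))
    (d : (Fin n → ℕ) → (Fin n → ℝ) × Matrix (Fin n) (Fin n) ℝ)
    (h : ∀ x : Fin n → ℝ, (∀ i, 0 < x i) → ∑ y ∈ S, mono x y • d y = 0) :
    ∀ y ∈ S, d y = 0 := by
  intro y hy
  have h1 : ∀ j : Fin n, ∀ y ∈ S, (d y).1 j = 0 := by
    intro j
    apply mono_indep S (fun y => (d y).1 j)
    intro x hx
    have := congrFun (congrArg Prod.fst (h x hx)) j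
    simpa [Prod.fst_sum, Finset.sum_apply, mul_comm] using this
  have h2 : ∀ i j : Fin n, ∀ y ∈ S, (d y).2 i j = 0 := by
    intro i j
    apply mono_indep S (fun y => (d y).2 i j)
    intro x hx
    have := congrArg (fun p => p.2 i j) (h x hx)
    simpa [Prod.snd_sum, Matrix.sum_apply, mul_comm] using this
  refine Prod.ext ?_ ?_
  · funext j; exact h1 j y hy
  · ext i j; exact h2 i j y hy

lemma pairV_ne {n : ℕ} (r : Rxn n) (hr : r.1 ≠ r.2) :
    0 < ∑ i, (toR r.2 - toR r.1) i * (toR r.2 - toR r.1) i := by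
  have : ∃ i, r.1 i ≠ r.2 i := by
    by_contra hc
    push_neg at hc
    exact hr (funext hc)
  obtain ⟨i, hi⟩ := this
  have hvi : (toR r.2 - toR r.1) i ≠ 0 := by
    simp only [Pi.sub_apply, toR, sub_ne_zero]
    exact fun hc => hi (Nat.cast_injective hc).symm
  apply Finset.sum_pos'
  · intro j _; exact mul_self_nonneg _
  · exact ⟨i, Finset.mem_univ i, mul_self_pos.mpr hvi⟩

/-- Theorem (confoundability): two distinct reaction networks on the same species are
confoundable w.r.t. their generators iff they have the same source complexes and for every
source complex `y` the cones `Cone_R(y)` and `Cone_{R'}(y)` intersect. -/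
theorem confoundable_iff_cones_intersect {n : ℕ} (R R' : Finset (Rxn n))
    (hR : ∀ r ∈ R, r.1 ≠ r.2) (hR' : ∀ r ∈ R', r.1 ≠ r.2) (hne : R ≠ R') :
    (∃ κ κ' : Rxn n → ℝ, (∀ r ∈ R, 0 < κ r) ∧ (∀ r ∈ R', 0 < κ' r) ∧
      ∀ x ∈ posOrth n, drift R κ x = drift R' κ' x ∧ diffMat R κ x = diffMat R' κ' x)
    ↔
    ((∀ y : Fin n → ℕ, (∃ r ∈ R, r.1 = y) ↔ (∃ r ∈ R', r.1 = y)) ∧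
      ∀ y : Fin n → ℕ, (∃ r ∈ R, r.1 = y) → (cone R y ∩ cone R' y).Nonempty) := by
  set S : Finset (Fin n → ℕ) := R.image Prod.fst ∪ R'.image Prod.fst with hS
  have hTR : ∀ r ∈ R, r.1 ∈ S := fun r hr =>
    Finset.mem_union_left _ (Finset.mem_image_of_mem _ hr)
  have hTR' : ∀ r ∈ R', r.1 ∈ S := fun r hr =>
    Finset.mem_union_right _ (Finset.mem_image_of_mem _ hr)
  constructor
  · rintro ⟨κ, κ', hκ, hκ', heq⟩
    -- main extraction: cSum agree on S
    have hkey : ∀ y ∈ S, cSum R κ y = cSum R' κ' y := by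
      have := pair_indep S (fun y => cSum R κ y - cSum R' κ' y) ?_
      · intro y hy
        have := this y hy
        exact sub_eq_zero.mp this
      · intro x hx
        have hx' : x ∈ posOrth n := hx
        obtain ⟨h1, h2⟩ := heq x hx'
        have hF : (∑ r ∈ R, (κ r * mono x r.1) • pairV r)
            = ∑ r ∈ R', (κ' r * mono x r.1) • pairV r := by
          refine Prod.ext ?_ ?_
          · rw [← drift_eq_fst, ← drift_eq_fst]; exact h1
          · rw [← diff_eq_snd, ← diff_eq_snd]; exact h2
        rw [group_sum R κ S hTR x, group_sum R' κ' S hTR' x] at hF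
        calc ∑ y ∈ S, mono x y • (cSum R κ y - cSum R' κ' y)
            = ∑ y ∈ S, (mono x y • cSum R κ y - mono x y • cSum R' κ' y) := by
              exact Finset.sum_congr rfl fun y _ => smul_sub _ _ _
          _ = 0 := by rw [Finset.sum_sub_distrib, hF, sub_self]
    have hsources : ∀ y : Fin n → ℕ, (∃ r ∈ R, r.1 = y) ↔ (∃ r ∈ R', r.1 = y) := by
      -- via trace argument
      have main : ∀ (Q Q' : Finset (Rxn n)) (μ μ' : Rxn n → ℝ),
          (∀ r ∈ Q, r.1 ≠ r.2) → (∀ r ∈ Q, 0 < μ r) →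
          ∀ y : Fin n → ℕ, (∃ r ∈ Q, r.1 = y) → ¬ (∃ r ∈ Q', r.1 = y) →
          cSum Q μ y ≠ cSum Q' μ' y := by
        intro Q Q' μ μ' hQ hμ y hy hny hcontr
        have hflt' : Q'.filter (fun r => r.1 = y) = ∅ := by
          apply Finset.filter_eq_empty_iff.mpr
          intro r hr hc
          exact hny ⟨r, hr, hc⟩
        have hz : cSum Q μ y = 0 := by
          rw [hcontr, cSum, hflt', Finset.sum_empty]
        have htr := congrArg (fun p => Matrix.trace p.2) hz
        simp only [cSum, Prod.snd_sum, Prod.snd_zero, Matrix.trace_zero] at htr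
        rw [Matrix.trace_sum] at htr
        have htr' : ∑ r ∈ Q.filter (fun r => r.1 = y),
            μ r * ∑ i, (toR r.2 - toR r.1) i * (toR r.2 - toR r.1) i = 0 := by
          rw [← htr]
          refine Finset.sum_congr rfl fun r hr => ?_
          have : (μ r • pairV r).2 = μ r • (pairV r).2 := rfl
          rw [this, Matrix.trace_smul, pairV]
          simp only [smul_eq_mul]
          congr 1
        have hpos : 0 < ∑ r ∈ Q.filter (fun r => r.1 = y),
            μ r * ∑ i, (toR r.2 - toR r.1) i * (toR r.2 - toR r.1) i := by
          apply Finset.sum_pos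
          · intro r hr
            have hrQ := (Finset.mem_filter.mp hr).1
            exact mul_pos (hμ r hrQ) (pairV_ne r (hQ r hrQ))
          · obtain ⟨r, hr, hr1⟩ := hy
            exact ⟨r, Finset.mem_filter.mpr ⟨hr, hr1⟩⟩
        rw [htr'] at hpos
        exact lt_irrefl 0 hpos
      intro y
      constructor
      · intro hy
        by_contra hny
        refine main R R' κ κ' hR hκ y hy hny (hkey y ?_)
        obtain ⟨r, hr, hr1⟩ := hy
        exact hr1 ▸ hTR r hr
      · intro hy
        by_contra hny
        refine main R' R κ' κ hR' hκ' y hy hny ?_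
        refine (hkey y ?_).symm
        obtain ⟨r, hr, hr1⟩ := hy
        exact hr1 ▸ hTR' r hr
    refine ⟨hsources, ?_⟩
    intro y hy
    have hyS : y ∈ S := by
      obtain ⟨r, hr, hr1⟩ := hy
      exact hr1 ▸ hTR r hr
    refine ⟨cSum R κ y, ⟨κ, fun r hr => hκ r (Finset.mem_filter.mp hr).1, rfl⟩, ?_⟩
    rw [hkey y hyS]
    exact ⟨κ', fun r hr => hκ' r (Finset.mem_filter.mp hr).1, rfl⟩
  · rintro ⟨hsrc, hcone⟩
    have key : ∀ y : Fin n → ℕ, ∃ α α' : Rxn n → ℝ,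
        (∀ r ∈ R.filter (fun r => r.1 = y), 0 < α r) ∧
        (∀ r ∈ R'.filter (fun r => r.1 = y), 0 < α' r) ∧
        (∑ r ∈ R.filter (fun r => r.1 = y), α r • pairV r
          = ∑ r ∈ R'.filter (fun r => r.1 = y), α' r • pairV r) := by
      intro y
      by_cases hy : ∃ r ∈ R, r.1 = y
      · obtain ⟨p, ⟨α, hα, hp⟩, ⟨α', hα', hp'⟩⟩ := hcone y hy
        refine ⟨α, α', hα, hα', ?_⟩
        simp only [pairV]
        exact hp.symm.trans hp'
      · have hy' : ¬ ∃ r ∈ R', r.1 = y := fun hc => hy ((hsrc y).mpr hc)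
        have e1 : R.filter (fun r => r.1 = y) = ∅ :=
          Finset.filter_eq_empty_iff.mpr fun r hr hc => hy ⟨r, hr, hc⟩
        have e2 : R'.filter (fun r => r.1 = y) = ∅ :=
          Finset.filter_eq_empty_iff.mpr fun r hr hc => hy' ⟨r, hr, hc⟩
        exact ⟨fun _ => 1, fun _ => 1, by simp [e1], by simp [e2], by rw [e1, e2]⟩
    choose A A' hA hA' hEq using key
    refine ⟨fun r => A r.1 r, fun r => A' r.1 r, ?_, ?_, ?_⟩
    · intro r hr
      exact hA r.1 r (Finset.mem_filter.mpr ⟨hr, rfl⟩)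
    · intro r hr
      exact hA' r.1 r (Finset.mem_filter.mpr ⟨hr, rfl⟩)
    · intro x hx
      have hc : ∀ y, cSum R (fun r => A r.1 r) y = cSum R' (fun r => A' r.1 r) y := by
        intro y
        rw [cSum, cSum]
        have l1 : ∑ r ∈ R.filter (fun r => r.1 = y), A r.1 r • pairV r
            = ∑ r ∈ R.filter (fun r => r.1 = y), A y r • pairV r := by
          refine Finset.sum_congr rfl fun r hr => ?_
          rw [(Finset.mem_filter.mp hr).2]
        have l2 : ∑ r ∈ R'.filter (fun r => r.1 = y), A' r.1 r • pairV r
            = ∑ r ∈ R'.filter (fun r => r.1 = y), A' y r • pairV r := by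
          refine Finset.sum_congr rfl fun r hr => ?_
          rw [(Finset.mem_filter.mp hr).2]
        rw [l1, l2]
        exact hEq y
      have hF : (∑ r ∈ R, ((fun r : Rxn n => A r.1 r) r * mono x r.1) • pairV r)
          = ∑ r ∈ R', ((fun r : Rxn n => A' r.1 r) r * mono x r.1) • pairV r := by
        rw [group_sum R _ S hTR x, group_sum R' _ S hTR' x]
        exact Finset.sum_congr rfl fun y _ => by rw [hc y]
      constructor
      · rw [drift_eq_fst, drift_eq_fst, hF]
      · rw [diff_eq_snd, diff_eq_snd, hF]
end

section
/- Let R ⊆ R'' be reaction networks on the same n species. If R is not reaction-identifiable w.r.t. its generator (i.e. there exist positive rate vectors κ ≠ κ' on R with A_{R,κ}(x) = A_{R,κ'}(x) and B_{R,κ}(x) = B_{R,κ'}(x) for all x ∈ ℝ^n_{>0}), then R'' is not reaction-identifiable w.r.t. its generator: there exist positive rate vectors λ ≠ λ' on R'' with A_{R'',λ}(x) = A_{R'',λ'}(x) and B_{R'',λ}(x) = B_{R'',λ'}(x) for all x ∈ ℝ^n_{>0}. -/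
open Finset

/-- Lemma: non-reaction-identifiability w.r.t. the generator is inherited by supernetworks:
if a subnetwork `R ⊆ R''` admits two distinct positive rate vectors with the same drift and
diffusion matrix on the positive orthant, then so does `R''`. -/
theorem not_identifiable_of_subnetwork {n : ℕ} (R R'' : Finset (Rxn n))
    (hsub : R ⊆ R'') (hR'' : ∀ r ∈ R'', r.1 ≠ r.2)
    (h : ∃ κ κ' : Rxn n → ℝ, (∀ r ∈ R, 0 < κ r) ∧ (∀ r ∈ R, 0 < κ' r) ∧
      (∃ r ∈ R, κ r ≠ κ' r) ∧
      ∀ x ∈ posOrth n, drift R κ x = drift R κ' x ∧ diffMat R κ x = diffMat R κ' x) :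
    ∃ lam lam' : Rxn n → ℝ, (∀ r ∈ R'', 0 < lam r) ∧ (∀ r ∈ R'', 0 < lam' r) ∧
      (∃ r ∈ R'', lam r ≠ lam' r) ∧
      ∀ x ∈ posOrth n, drift R'' lam x = drift R'' lam' x ∧
        diffMat R'' lam x = diffMat R'' lam' x := by
  obtain ⟨κ, κ', hκ, hκ', ⟨r0, hr0, hne⟩, heq⟩ := h
  refine ⟨fun r => if r ∈ R then κ r else 1, fun r => if r ∈ R then κ' r else 1,
    ?_, ?_, ⟨r0, hsub hr0, by simp [hr0, hne]⟩, ?_⟩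
  · intro r _; by_cases hr : r ∈ R <;> simp [hr, hκ r, hr]
  · intro r _; by_cases hr : r ∈ R <;> simp [hr, hκ' r, hr]
  · intro x hx
    have hd : ∀ κ : Rxn n → ℝ,
        drift R'' (fun r => if r ∈ R then κ r else 1) x =
          drift R κ x + ∑ r ∈ R'' \ R, (mono x r.1) • (toR r.2 - toR r.1) := by
      intro κ
      unfold drift
      rw [← Finset.sum_sdiff hsub, add_comm]
      congr 1
      · exact Finset.sum_congr rfl (fun r hr => by simp [hr])
      · exact Finset.sum_congr rfl (fun r hr => by
          simp [Finset.mem_sdiff.mp hr |>.2])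
    have hm : ∀ κ : Rxn n → ℝ,
        diffMat R'' (fun r => if r ∈ R then κ r else 1) x =
          diffMat R κ x + ∑ r ∈ R'' \ R,
            (mono x r.1) • Matrix.vecMulVec (toR r.2 - toR r.1) (toR r.2 - toR r.1) := by
      intro κ
      unfold diffMat
      rw [← Finset.sum_sdiff hsub, add_comm]
      congr 1
      · exact Finset.sum_congr rfl (fun r hr => by simp [hr])
      · exact Finset.sum_congr rfl (fun r hr => by
          simp [Finset.mem_sdiff.mp hr |>.2])
    obtain ⟨h1, h2⟩ := heq x hx
    exact ⟨by rw [hd κ, hd κ', h1], by rw [hm κ, hm κ', h2]⟩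
end

section
/- Let R and R' be reaction networks on the same n species with the same source complexes, let κ be a positive rate vector on R, let β : R' → ℝ be positive, let c ∈ ℝ^n_{>0}, and let G = diag(c₁,…,cₙ). Suppose that for every source complex y: Σ_{(y,z)∈R} κ(y,z)(z − y) = Σ_{(y,z)∈R'} β(y,z) G(z − y) and Σ_{(y,z)∈R} κ(y,z)(z − y)(z − y)^⊺ = Σ_{(y,z)∈R'} β(y,z) G(z − y)(z − y)^⊺G. Define the positive rate vector κ' on R' by κ'(y,z) := β(y,z) c^y, where c^y := ∏_{j=1}^n c_j^{y_j}. Then for all z ∈ ℝ^n_{>0}: G^{-1} A_{R,κ}(Gz) = A_{R',κ'}(z) and G^{-1} B_{R,κ}(Gz) G^{-1} = B_{R',κ'}(z). -/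
open Finset

/-- Proposition (linear conjugacy of rates): if the coefficient sums of `(R, κ)` match those of
`(R', β)` twisted by the positive diagonal matrix `G = diag c`, then the system `(R', κ')` with
`κ'(y,z) = β(y,z) cᶻ` is linearly conjugated to `(R, κ)` at the level of drift and diffusion:
`G⁻¹ A_{R,κ}(Gz) = A_{R',κ'}(z)` and `G⁻¹ B_{R,κ}(Gz) G⁻¹ = B_{R',κ'}(z)` on the positive
orthant. -/
theorem linear_conjugacy_rates {n : ℕ} (R R' : Finset (Rxn n))
    (hR : ∀ r ∈ R, r.1 ≠ r.2) (hR' : ∀ r ∈ R', r.1 ≠ r.2)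
    (hsrc : ∀ y : Fin n → ℕ, (∃ r ∈ R, r.1 = y) ↔ (∃ r ∈ R', r.1 = y))
    (κ β : Rxn n → ℝ) (hκ : ∀ r ∈ R, 0 < κ r) (hβ : ∀ r ∈ R', 0 < β r)
    (c : Fin n → ℝ) (hc : ∀ i, 0 < c i)
    (hA : ∀ y : Fin n → ℕ, (∃ r ∈ R, r.1 = y) →
      ∑ r ∈ R.filter (fun r => r.1 = y), κ r • (toR r.2 - toR r.1)
        = ∑ r ∈ R'.filter (fun r => r.1 = y),
            β r • (Matrix.diagonal c).mulVec (toR r.2 - toR r.1))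
    (hB : ∀ y : Fin n → ℕ, (∃ r ∈ R, r.1 = y) →
      ∑ r ∈ R.filter (fun r => r.1 = y),
          κ r • Matrix.vecMulVec (toR r.2 - toR r.1) (toR r.2 - toR r.1)
        = ∑ r ∈ R'.filter (fun r => r.1 = y),
            β r • (Matrix.diagonal c *
              Matrix.vecMulVec (toR r.2 - toR r.1) (toR r.2 - toR r.1) * Matrix.diagonal c)) :
    ∀ z ∈ posOrth n,
      (Matrix.diagonal c)⁻¹.mulVec (drift R κ ((Matrix.diagonal c).mulVec z))
          = drift R' (fun r => β r * ∏ j, c j ^ r.1 j) z ∧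
      (Matrix.diagonal c)⁻¹ * diffMat R κ ((Matrix.diagonal c).mulVec z) *
            (Matrix.diagonal c)⁻¹
          = diffMat R' (fun r => β r * ∏ j, c j ^ r.1 j) z := by
  intro z hz
  set G := Matrix.diagonal c with hGdef
  have hdet : IsUnit G.det := by
    rw [hGdef, Matrix.det_diagonal]
    exact (isUnit_iff_ne_zero).mpr (Finset.prod_pos (fun i _ => hc i)).ne'
  have hGG : G⁻¹ * G = 1 := Matrix.nonsing_inv_mul G hdet
  have hGG' : G * G⁻¹ = 1 := Matrix.mul_nonsing_inv G hdet
  have himg : R.image Prod.fst = R'.image Prod.fst := by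
    ext y
    simp only [Finset.mem_image]
    exact hsrc y
  have hmono : ∀ y : Fin n → ℕ, mono (G.mulVec z) y = (∏ j, c j ^ y j) * mono z y := by
    intro y
    simp [mono, hGdef, Matrix.mulVec_diagonal, mul_pow, Finset.prod_mul_distrib]
  have hmem : ∀ y ∈ R.image Prod.fst, ∃ r ∈ R, r.1 = y := by
    intro y hy
    simpa [Finset.mem_image] using hy
  constructor
  · have h1 : drift R κ (G.mulVec z)
        = ∑ y ∈ R.image Prod.fst, ((∏ j, c j ^ y j) * mono z y) •
            ∑ r ∈ R.filter (fun r => r.1 = y), κ r • (toR r.2 - toR r.1) := by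
      rw [drift, ← Finset.sum_fiberwise_of_maps_to
        (fun r hr => Finset.mem_image_of_mem Prod.fst hr)]
      refine Finset.sum_congr rfl fun y _ => ?_
      rw [Finset.smul_sum]
      refine Finset.sum_congr rfl fun r hr => ?_
      obtain ⟨_, hry⟩ := Finset.mem_filter.mp hr
      rw [smul_smul, hmono, hry]
      ring_nf
    have h2 : drift R' (fun r => β r * ∏ j, c j ^ r.1 j) z
        = ∑ y ∈ R.image Prod.fst, ((∏ j, c j ^ y j) * mono z y) •
            ∑ r ∈ R'.filter (fun r => r.1 = y), β r • (toR r.2 - toR r.1) := by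
      rw [drift, himg, ← Finset.sum_fiberwise_of_maps_to
        (fun r hr => Finset.mem_image_of_mem Prod.fst hr)]
      refine Finset.sum_congr rfl fun y _ => ?_
      rw [Finset.smul_sum]
      refine Finset.sum_congr rfl fun r hr => ?_
      obtain ⟨_, hry⟩ := Finset.mem_filter.mp hr
      rw [smul_smul, hry]
      ring_nf
    rw [h1, h2]
    rw [← Matrix.mulVecLin_apply, map_sum]
    refine Finset.sum_congr rfl fun y hy => ?_
    rw [map_smul, Matrix.mulVecLin_apply, hA y (hmem y hy), ← Matrix.mulVecLin_apply, map_sum]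
    congr 1
    refine Finset.sum_congr rfl fun r _ => ?_
    rw [map_smul, Matrix.mulVecLin_apply, Matrix.mulVec_mulVec, hGG, Matrix.one_mulVec]
  · have h1 : diffMat R κ (G.mulVec z)
        = ∑ y ∈ R.image Prod.fst, ((∏ j, c j ^ y j) * mono z y) •
            ∑ r ∈ R.filter (fun r => r.1 = y),
              κ r • Matrix.vecMulVec (toR r.2 - toR r.1) (toR r.2 - toR r.1) := by
      rw [diffMat, ← Finset.sum_fiberwise_of_maps_to
        (fun r hr => Finset.mem_image_of_mem Prod.fst hr)]
      refine Finset.sum_congr rfl fun y _ => ?_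
      rw [Finset.smul_sum]
      refine Finset.sum_congr rfl fun r hr => ?_
      obtain ⟨_, hry⟩ := Finset.mem_filter.mp hr
      rw [smul_smul, hmono, hry]
      ring_nf
    have h2 : diffMat R' (fun r => β r * ∏ j, c j ^ r.1 j) z
        = ∑ y ∈ R.image Prod.fst, ((∏ j, c j ^ y j) * mono z y) •
            ∑ r ∈ R'.filter (fun r => r.1 = y),
              β r • Matrix.vecMulVec (toR r.2 - toR r.1) (toR r.2 - toR r.1) := by
      rw [diffMat, himg, ← Finset.sum_fiberwise_of_maps_to
        (fun r hr => Finset.mem_image_of_mem Prod.fst hr)]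
      refine Finset.sum_congr rfl fun y _ => ?_
      rw [Finset.smul_sum]
      refine Finset.sum_congr rfl fun r hr => ?_
      obtain ⟨_, hry⟩ := Finset.mem_filter.mp hr
      rw [smul_smul, hry]
      ring_nf
    rw [h1, h2, Finset.mul_sum, Finset.sum_mul]
    refine Finset.sum_congr rfl fun y hy => ?_
    rw [mul_smul_comm, smul_mul_assoc]
    congr 1
    rw [hB y (hmem y hy), Finset.mul_sum, Finset.sum_mul]
    refine Finset.sum_congr rfl fun r _ => ?_
    rw [mul_smul_comm, smul_mul_assoc]
    congr 1
    calc G⁻¹ * (G * Matrix.vecMulVec (toR r.2 - toR r.1) (toR r.2 - toR r.1) * G) * G⁻¹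
        = (G⁻¹ * G) * Matrix.vecMulVec (toR r.2 - toR r.1) (toR r.2 - toR r.1) * (G * G⁻¹) := by
          noncomm_ring
      _ = _ := by rw [hGG, hGG', Matrix.one_mul, Matrix.mul_one]
end

section
/- Let R be a reaction network on one species (complexes are natural numbers, each reaction (y, y') ∈ R ⊂ ℕ × ℕ has y ≠ y'). Then R is reaction-identifiable w.r.t. its generator if and only if every source complex of R is the source of at most two reactions of R. -/
open Finset

noncomputable def drift1 (R : Finset (ℕ × ℕ)) (κ : ℕ × ℕ → ℝ) (x : ℝ) : ℝ :=
  ∑ r ∈ R, κ r * x ^ r.1 * ((r.2 : ℝ) - (r.1 : ℝ))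

noncomputable def diff1 (R : Finset (ℕ × ℕ)) (κ : ℕ × ℕ → ℝ) (x : ℝ) : ℝ :=
  ∑ r ∈ R, κ r * x ^ r.1 * ((r.2 : ℝ) - (r.1 : ℝ)) ^ 2

lemma coeff_sum_zero (S : Finset (ℕ × ℕ)) (g : ℕ × ℕ → ℝ)
    (h : ∀ x : ℝ, 0 < x → ∑ r ∈ S, g r * x ^ r.1 = 0) (y : ℕ) :
    ∑ r ∈ S.filter (fun r => r.1 = y), g r = 0 := by
  set p : Polynomial ℝ := ∑ r ∈ S, Polynomial.C (g r) * Polynomial.X ^ r.1 with hp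
  have hev : ∀ x : ℝ, 0 < x → p.eval x = 0 := by
    intro x hx
    rw [hp]
    rw [Polynomial.eval_finset_sum]
    simpa using h x hx
  have hp0 : p = 0 := Polynomial.eq_zero_of_infinite_isRoot p
    ((Set.Ioi_infinite (0:ℝ)).mono fun x hx => hev x hx)
  have hc := congrArg (fun q => Polynomial.coeff q y) hp0
  simp only [hp, Polynomial.finset_sum_coeff, Polynomial.coeff_C_mul,
    Polynomial.coeff_X_pow, Polynomial.coeff_zero, mul_ite, mul_one, mul_zero] at hc
  rw [Finset.sum_filter]
  simpa [eq_comm] using hc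

/-- A one-species reaction network is reaction-identifiable w.r.t. its generator iff every
source complex is the source of at most two reactions. -/
theorem one_species_identifiable_iff (R : Finset (ℕ × ℕ)) (hR : ∀ r ∈ R, r.1 ≠ r.2) :
    (∀ κ κ' : ℕ × ℕ → ℝ, (∀ r ∈ R, 0 < κ r) → (∀ r ∈ R, 0 < κ' r) →
      (∃ r ∈ R, κ r ≠ κ' r) →
      ∃ x : ℝ, 0 < x ∧ (drift1 R κ x, diff1 R κ x) ≠ (drift1 R κ' x, diff1 R κ' x))
    ↔
    (∀ y : ℕ, (∃ r ∈ R, r.1 = y) → (R.filter (fun r => r.1 = y)).card ≤ 2) := by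
  constructor
  · -- identifiable → every source has at most two reactions
    intro hid y _hy
    by_contra hc
    push_neg at hc
    obtain ⟨r1, r2, r3, h1, h2, h3, h12, h13, h23⟩ := Finset.two_lt_card_iff.mp hc
    simp only [Finset.mem_filter] at h1 h2 h3
    obtain ⟨h1R, h1y⟩ := h1
    obtain ⟨h2R, h2y⟩ := h2
    obtain ⟨h3R, h3y⟩ := h3
    set d1 : ℝ := (r1.2 : ℝ) - (y : ℝ) with hd1
    set d2 : ℝ := (r2.2 : ℝ) - (y : ℝ) with hd2
    set d3 : ℝ := (r3.2 : ℝ) - (y : ℝ) with hd3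
    have hdne : ∀ r ∈ R, r.1 = y → ((r.2 : ℝ) - (y : ℝ)) ≠ 0 := by
      intro r hr hry hz
      have h' : r.1 ≠ r.2 := hR r hr
      rw [hry] at h'
      exact h' (by exact_mod_cast (sub_eq_zero.mp hz).symm)
    have hne1 : d1 ≠ 0 := hdne r1 h1R h1y
    have hne2 : d2 ≠ 0 := hdne r2 h2R h2y
    have hne3 : d3 ≠ 0 := hdne r3 h3R h3y
    have hdist : ∀ a b : ℕ × ℕ, a.1 = y → b.1 = y → a ≠ b →
        ((a.2 : ℝ) - (y : ℝ)) ≠ ((b.2 : ℝ) - (y : ℝ)) := by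
      intro a b hay hby hab hz
      have : (a.2 : ℝ) = (b.2 : ℝ) := by linarith [sub_left_inj.mp hz]
      exact hab (Prod.ext (hay.trans hby.symm) (by exact_mod_cast this))
    have hne12 : d1 ≠ d2 := hdist r1 r2 h1y h2y h12
    have hne13 : d1 ≠ d3 := hdist r1 r3 h1y h3y h13
    have hne23 : d2 ≠ d3 := hdist r2 r3 h2y h3y h23
    set c1 : ℝ := d2 * d3 * (d3 - d2) with hc1def
    set c2 : ℝ := d1 * d3 * (d1 - d3) with hc2def
    set c3 : ℝ := d1 * d2 * (d2 - d1) with hc3def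
    have hc1 : c1 ≠ 0 :=
      mul_ne_zero (mul_ne_zero hne2 hne3) (sub_ne_zero.mpr (Ne.symm hne23))
    set M : ℝ := |c1| + |c2| + |c3| + 1 with hM
    set κ : ℕ × ℕ → ℝ := fun _ => M with hκdef
    set κ' : ℕ × ℕ → ℝ := fun r =>
      if r = r1 then M + c1 else if r = r2 then M + c2 else if r = r3 then M + c3 else M
      with hκ'def
    have hMpos : 0 < M := by
      have := abs_nonneg c1; have := abs_nonneg c2; have := abs_nonneg c3
      rw [hM]; linarith
    have hκpos : ∀ r ∈ R, 0 < κ r := fun r _ => hMpos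
    have hκ'pos : ∀ r ∈ R, 0 < κ' r := by
      intro r _
      rw [hκ'def]
      simp only
      have b1 := neg_abs_le c1; have b2 := neg_abs_le c2; have b3 := neg_abs_le c3
      have := abs_nonneg c1; have := abs_nonneg c2; have := abs_nonneg c3
      split_ifs <;> (rw [hM]; linarith)
    have hκ'r1 : κ' r1 = M + c1 := by rw [hκ'def]; simp
    have hκ'r2 : κ' r2 = M + c2 := by rw [hκ'def]; simp [Ne.symm h12]
    have hκ'r3 : κ' r3 = M + c3 := by rw [hκ'def]; simp [Ne.symm h13, Ne.symm h23]
    have hdiffκ : ∃ r ∈ R, κ r ≠ κ' r := by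
      refine ⟨r1, h1R, ?_⟩
      rw [hκ'r1, hκdef]
      intro hh
      exact hc1 (by linarith)
    obtain ⟨x, hx, hnex⟩ := hid κ κ' hκpos hκ'pos hdiffκ
    apply hnex
    -- key: for any weight w with c1 w(r1) + c2 w(r2) + c3 w(r3) = 0 the sums agree
    have key : ∀ w : ℕ × ℕ → ℝ, c1 * w r1 + c2 * w r2 + c3 * w r3 = 0 →
        ∑ r ∈ R, κ r * w r = ∑ r ∈ R, κ' r * w r := by
      intro w hw
      have hT : ({r1, r2, r3} : Finset (ℕ × ℕ)) ⊆ R := by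
        intro r hr
        simp only [Finset.mem_insert, Finset.mem_singleton] at hr
        rcases hr with rfl | rfl | rfl <;> assumption
      have hsum : ∑ r ∈ R, (κ' r - κ r) * w r
          = ∑ r ∈ ({r1, r2, r3} : Finset (ℕ × ℕ)), (κ' r - κ r) * w r := by
        refine (Finset.sum_subset hT ?_).symm
        intro r _ hrT
        simp only [Finset.mem_insert, Finset.mem_singleton, not_or] at hrT
        obtain ⟨hn1, hn2, hn3⟩ := hrT
        have : κ' r = κ r := by rw [hκ'def, hκdef]; simp [hn1, hn2, hn3]
        rw [this, sub_self, zero_mul]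
      have hset : ∑ r ∈ ({r1, r2, r3} : Finset (ℕ × ℕ)), (κ' r - κ r) * w r
          = c1 * w r1 + c2 * w r2 + c3 * w r3 := by
        rw [Finset.sum_insert (by simp [h12, h13]),
          Finset.sum_insert (by simp [h23]), Finset.sum_singleton,
          hκ'r1, hκ'r2, hκ'r3, hκdef]
        ring
      have hz : ∑ r ∈ R, (κ' r - κ r) * w r = 0 := by rw [hsum, hset, hw]
      have : ∑ r ∈ R, κ' r * w r - ∑ r ∈ R, κ r * w r = 0 := by
        rw [← Finset.sum_sub_distrib]
        rw [← hz]
        exact Finset.sum_congr rfl fun r _ => by ring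
      linarith
    have hAeq : drift1 R κ x = drift1 R κ' x := by
      unfold drift1
      have := key (fun r => x ^ r.1 * ((r.2 : ℝ) - (r.1 : ℝ))) ?_
      · calc ∑ r ∈ R, κ r * x ^ r.1 * ((r.2 : ℝ) - (r.1 : ℝ))
            = ∑ r ∈ R, κ r * (x ^ r.1 * ((r.2 : ℝ) - (r.1 : ℝ))) :=
              Finset.sum_congr rfl fun r _ => by ring
          _ = ∑ r ∈ R, κ' r * (x ^ r.1 * ((r.2 : ℝ) - (r.1 : ℝ))) := this
          _ = ∑ r ∈ R, κ' r * x ^ r.1 * ((r.2 : ℝ) - (r.1 : ℝ)) :=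
              Finset.sum_congr rfl fun r _ => by ring
      · rw [h1y, h2y, h3y]
        rw [hc1def, hc2def, hc3def, hd1, hd2, hd3]
        ring
    have hBeq : diff1 R κ x = diff1 R κ' x := by
      unfold diff1
      have := key (fun r => x ^ r.1 * ((r.2 : ℝ) - (r.1 : ℝ)) ^ 2) ?_
      · calc ∑ r ∈ R, κ r * x ^ r.1 * ((r.2 : ℝ) - (r.1 : ℝ)) ^ 2
            = ∑ r ∈ R, κ r * (x ^ r.1 * ((r.2 : ℝ) - (r.1 : ℝ)) ^ 2) :=
              Finset.sum_congr rfl fun r _ => by ring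
          _ = ∑ r ∈ R, κ' r * (x ^ r.1 * ((r.2 : ℝ) - (r.1 : ℝ)) ^ 2) := this
          _ = ∑ r ∈ R, κ' r * x ^ r.1 * ((r.2 : ℝ) - (r.1 : ℝ)) ^ 2 :=
              Finset.sum_congr rfl fun r _ => by ring
      · rw [h1y, h2y, h3y]
        rw [hc1def, hc2def, hc3def, hd1, hd2, hd3]
        ring
    rw [hAeq, hBeq]
  · -- at most two reactions per source → identifiable
    intro hcard κ κ' hκ hκ' hdiff
    obtain ⟨r0, hr0, hne0⟩ := hdiff
    by_contra hno
    push_neg at hno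
    have hAB : ∀ x : ℝ, 0 < x →
        drift1 R κ x = drift1 R κ' x ∧ diff1 R κ x = diff1 R κ' x := by
      intro x hx
      have := hno x hx
      exact ⟨congrArg Prod.fst this, congrArg Prod.snd this⟩
    have hA : ∀ y : ℕ, ∑ r ∈ R.filter (fun r => r.1 = y),
        (κ r - κ' r) * ((r.2 : ℝ) - (r.1 : ℝ)) = 0 := by
      intro y
      apply coeff_sum_zero
      intro x hx
      have h1 : ∑ r ∈ R, (κ r - κ' r) * ((r.2 : ℝ) - (r.1 : ℝ)) * x ^ r.1
          = drift1 R κ x - drift1 R κ' x := by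
        unfold drift1
        rw [← Finset.sum_sub_distrib]
        exact Finset.sum_congr rfl fun r _ => by ring
      rw [h1, (hAB x hx).1, sub_self]
    have hB : ∀ y : ℕ, ∑ r ∈ R.filter (fun r => r.1 = y),
        (κ r - κ' r) * ((r.2 : ℝ) - (r.1 : ℝ)) ^ 2 = 0 := by
      intro y
      apply coeff_sum_zero
      intro x hx
      have h1 : ∑ r ∈ R, (κ r - κ' r) * ((r.2 : ℝ) - (r.1 : ℝ)) ^ 2 * x ^ r.1
          = diff1 R κ x - diff1 R κ' x := by
        unfold diff1
        rw [← Finset.sum_sub_distrib]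
        exact Finset.sum_congr rfl fun r _ => by ring
      rw [h1, (hAB x hx).2, sub_self]
    set F : Finset (ℕ × ℕ) := R.filter (fun r => r.1 = r0.1) with hF
    have hr0F : r0 ∈ F := by rw [hF]; exact Finset.mem_filter.mpr ⟨hr0, rfl⟩
    have hFsub : ∀ r ∈ F, r ∈ R ∧ r.1 = r0.1 := by
      intro r hr; rw [hF] at hr; exact Finset.mem_filter.mp hr
    have hdne : ∀ r ∈ R, ((r.2 : ℝ) - (r.1 : ℝ)) ≠ 0 := by
      intro r hr hz
      exact hR r hr (by exact_mod_cast (sub_eq_zero.mp hz).symm)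
    have hle : F.card ≤ 2 := hcard r0.1 ⟨r0, hr0, rfl⟩
    have hge : 1 ≤ F.card := Finset.card_pos.mpr ⟨r0, hr0F⟩
    have hor : F.card = 1 ∨ F.card = 2 := by omega
    rcases hor with h1 | h2
    · obtain ⟨a, ha⟩ := Finset.card_eq_one.mp h1
      have hr0a : r0 = a := by rw [ha] at hr0F; simpa using hr0F
      have haR : a ∈ R := (hFsub a (by rw [ha]; simp)).1
      have eq1 := hA r0.1
      rw [← hF, ha, Finset.sum_singleton] at eq1
      have : κ a - κ' a = 0 :=
        (mul_eq_zero.mp eq1).resolve_right (hdne a haR)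
      exact hne0 (hr0a ▸ sub_eq_zero.mp this)
    · obtain ⟨a, b, hab, hFab⟩ := Finset.card_eq_two.mp h2
      have haF : a ∈ F := by rw [hFab]; simp
      have hbF : b ∈ F := by rw [hFab]; simp
      obtain ⟨haR, hay⟩ := hFsub a haF
      obtain ⟨hbR, hby⟩ := hFsub b hbF
      have hda : ((a.2 : ℝ) - (a.1 : ℝ)) ≠ 0 := hdne a haR
      have hdb : ((b.2 : ℝ) - (b.1 : ℝ)) ≠ 0 := hdne b hbR
      have hdadb : ((a.2 : ℝ) - (a.1 : ℝ)) ≠ ((b.2 : ℝ) - (b.1 : ℝ)) := by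
        intro hz
        have h1' : (a.1 : ℝ) = (b.1 : ℝ) := by rw [hay, hby]
        have : (a.2 : ℝ) = (b.2 : ℝ) := by linarith
        exact hab (Prod.ext (hay.trans hby.symm) (by exact_mod_cast this))
      have eq1 := hA r0.1
      have eq2 := hB r0.1
      rw [← hF, hFab, Finset.sum_pair hab] at eq1 eq2
      have e3 : (κ b - κ' b) * (((b.2 : ℝ) - (b.1 : ℝ)) *
          (((b.2 : ℝ) - (b.1 : ℝ)) - ((a.2 : ℝ) - (a.1 : ℝ)))) = 0 := by
        linear_combination eq2 - ((a.2 : ℝ) - (a.1 : ℝ)) * eq1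
      have hb0 : κ b - κ' b = 0 :=
        (mul_eq_zero.mp e3).resolve_right
          (mul_ne_zero hdb (sub_ne_zero.mpr (Ne.symm hdadb)))
      have e4 : (κ a - κ' a) * ((a.2 : ℝ) - (a.1 : ℝ)) = 0 := by
        linear_combination eq1 - ((b.2 : ℝ) - (b.1 : ℝ)) * hb0
      have ha0 : κ a - κ' a = 0 := (mul_eq_zero.mp e4).resolve_right hda
      have : r0 = a ∨ r0 = b := by
        rw [hFab] at hr0F; simpa using hr0F
      rcases this with rfl | rfl
      · exact hne0 (sub_eq_zero.mp ha0)
      · exact hne0 (sub_eq_zero.mp hb0)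
end

section
/- Let k ∈ ℕ^n with k_i ≥ 1 for all i, and let R be a reaction network on n species each of whose reactions is of one of the forms (k_i e_i, k_j e_j) with i ≠ j, (k_i e_i, 0), or (0, k_i e_i), where e_i denotes the i-th standard basis vector of ℕ^n. Then the map κ ↦ A_{R,κ}|_{ℝ^n_{>0}}, from positive rate vectors on R to functions ℝ^n_{>0} → ℝ^n, is injective; i.e. R is reaction-identifiable w.r.t. its ODE (and hence also w.r.t. its generator). -/
open Finset

lemma mono_single {n : ℕ} (x : Fin n → ℝ) (j : Fin n) (m : ℕ) :
    mono x (Pi.single j m) = x j ^ m := by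
  unfold mono
  rw [Finset.prod_eq_single j]
  · rw [Pi.single_eq_same]
  · intro b _ hb; rw [Pi.single_eq_of_ne hb, pow_zero]
  · intro h; exact absurd (Finset.mem_univ j) h

lemma mono_zero' {n : ℕ} (x : Fin n → ℝ) : mono x (0 : Fin n → ℕ) = 1 := by
  simp [mono]

lemma single_k_ne_zero {n : ℕ} (k : Fin n → ℕ) (hk : ∀ i, 1 ≤ k i) (i : Fin n) :
    Pi.single i (k i) ≠ (0 : Fin n → ℕ) := by
  intro h
  have h2 := congrFun h i
  rw [Pi.single_eq_same] at h2
  simp only [Pi.zero_apply] at h2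
  have := hk i; omega

lemma single_k_inj {n : ℕ} (k : Fin n → ℕ) (hk : ∀ i, 1 ≤ k i) {i j : Fin n}
    (h : (Pi.single i (k i) : Fin n → ℕ) = Pi.single j (k j)) : i = j := by
  by_contra hne
  have h2 := congrFun h i
  simp only [Pi.single_eq_same, Pi.single_apply, if_neg hne] at h2
  have := hk i; omega

/-- k-unary reaction networks (all reactions of the form `kᵢeᵢ → kⱼeⱼ`, `kᵢeᵢ → 0`, or
`0 → kᵢeᵢ`) are reaction-identifiable w.r.t. their ODE: the positive rate vector is determined
by the drift on the positive orthant. -/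
theorem kUnary_ode_identifiable {n : ℕ} (k : Fin n → ℕ) (hk : ∀ i, 1 ≤ k i)
    (R : Finset (Rxn n))
    (hform : ∀ r ∈ R,
      (∃ i j : Fin n, i ≠ j ∧ r = (Pi.single i (k i), Pi.single j (k j))) ∨
      (∃ i : Fin n, r = (Pi.single i (k i), (0 : Fin n → ℕ))) ∨
      (∃ i : Fin n, r = ((0 : Fin n → ℕ), Pi.single i (k i)))) :
    ∀ κ κ' : Rxn n → ℝ, (∀ r ∈ R, 0 < κ r) → (∀ r ∈ R, 0 < κ' r) →
      (∀ x ∈ posOrth n, drift R κ x = drift R κ' x) → ∀ r ∈ R, κ r = κ' r := by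
  classical
  intro κ κ' hκ hκ' heq
  set d : Rxn n → ℝ := fun r => κ r - κ' r with hd
  -- the key zero-drift identity for the difference of rates
  have key : ∀ x ∈ posOrth n,
      ∑ r ∈ R, (d r * mono x r.1) • (toR r.2 - toR r.1) = 0 := by
    intro x hx
    have h := sub_eq_zero.mpr (heq x hx)
    simp only [drift] at h
    rw [← Finset.sum_sub_distrib] at h
    calc ∑ r ∈ R, (d r * mono x r.1) • (toR r.2 - toR r.1)
        = ∑ r ∈ R, ((κ r * mono x r.1) • (toR r.2 - toR r.1)
            - (κ' r * mono x r.1) • (toR r.2 - toR r.1)) := by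
          apply Finset.sum_congr rfl; intro r _
          rw [hd]; rw [sub_mul, sub_smul]
      _ = 0 := h
  -- per-source sums for sources kᵢeᵢ vanish
  have hSi : ∀ i : Fin n,
      ∑ r ∈ R.filter (fun r => r.1 = Pi.single i (k i)), d r • (toR r.2 - toR r.1)
        = 0 := by
    intro i
    have heval : ∀ t : ℝ, 0 < t →
        (t ^ k i) • (∑ r ∈ R.filter (fun r => r.1 = Pi.single i (k i)),
            d r • (toR r.2 - toR r.1))
          + ∑ r ∈ R.filter (fun r => ¬ r.1 = Pi.single i (k i)),
              d r • (toR r.2 - toR r.1) = 0 := by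
      intro t ht
      set x : Fin n → ℝ := Function.update (fun _ => (1:ℝ)) i t with hxdef
      have hx : x ∈ posOrth n := by
        intro m
        rcases eq_or_ne m i with h | h
        · subst h; simp [hxdef, ht]
        · simp [hxdef, Function.update_of_ne h]
      have h0 := key x hx
      rw [← Finset.sum_filter_add_sum_filter_not R
        (fun r => r.1 = Pi.single i (k i))] at h0
      have hmono : ∀ r ∈ R, mono x r.1
          = if r.1 = Pi.single i (k i) then t ^ k i else 1 := by
        intro r hr
        rcases hform r hr with ⟨a, b, hab, hre⟩ | ⟨a, hre⟩ | ⟨a, hre⟩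
        · have h1 : r.1 = Pi.single a (k a) := by rw [hre]
          rw [h1, mono_single]
          rcases eq_or_ne a i with h | h
          · subst h; simp [hxdef]
          · rw [if_neg (fun hc => h (single_k_inj k hk hc))]
            simp [hxdef, Function.update_of_ne h]
        · have h1 : r.1 = Pi.single a (k a) := by rw [hre]
          rw [h1, mono_single]
          rcases eq_or_ne a i with h | h
          · subst h; simp [hxdef]
          · rw [if_neg (fun hc => h (single_k_inj k hk hc))]
            simp [hxdef, Function.update_of_ne h]
        · have h1 : r.1 = (0 : Fin n → ℕ) := by rw [hre]
          rw [h1, mono_zero', if_neg (fun hc => single_k_ne_zero k hk i hc.symm)]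
      have hA : ∑ r ∈ R.filter (fun r => r.1 = Pi.single i (k i)),
          (d r * mono x r.1) • (toR r.2 - toR r.1)
            = (t ^ k i) • ∑ r ∈ R.filter (fun r => r.1 = Pi.single i (k i)),
                d r • (toR r.2 - toR r.1) := by
        rw [Finset.smul_sum]
        apply Finset.sum_congr rfl
        intro r hr
        rw [Finset.mem_filter] at hr
        rw [hmono r hr.1, if_pos hr.2, smul_smul, mul_comm]
      have hB : ∑ r ∈ R.filter (fun r => ¬ r.1 = Pi.single i (k i)),
          (d r * mono x r.1) • (toR r.2 - toR r.1)
            = ∑ r ∈ R.filter (fun r => ¬ r.1 = Pi.single i (k i)),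
                d r • (toR r.2 - toR r.1) := by
        apply Finset.sum_congr rfl
        intro r hr
        rw [Finset.mem_filter] at hr
        rw [hmono r hr.1, if_neg hr.2, mul_one]
      rw [hA, hB] at h0
      exact h0
    have h1 := heval 1 one_pos
    have h2 := heval 2 two_pos
    rw [one_pow, one_smul] at h1
    have h3 : ((2:ℝ) ^ k i - 1) • (∑ r ∈ R.filter (fun r => r.1 = Pi.single i (k i)),
        d r • (toR r.2 - toR r.1)) = 0 := by
      rw [sub_smul, one_smul, sub_eq_zero]
      have := sub_eq_zero.mpr (h2.trans h1.symm)
      rw [add_sub_add_right_eq_sub, sub_eq_zero] at this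
      exact this
    have hne : ((2:ℝ) ^ k i - 1) ≠ 0 := by
      have : (1:ℝ) < 2 ^ k i := by
        apply one_lt_pow₀ (by norm_num) (by have := hk i; omega)
      linarith
    exact (smul_eq_zero.mp h3).resolve_left hne
  -- the zero-source sum vanishes
  have hS0 : ∑ r ∈ R.filter (fun r => r.1 = (0 : Fin n → ℕ)),
      d r • (toR r.2 - toR r.1) = 0 := by
    have hx1 : (fun _ => (1:ℝ)) ∈ posOrth n := fun m => one_pos
    have hT := key _ hx1
    have hT' : ∑ r ∈ R, d r • (toR r.2 - toR r.1) = 0 := by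
      rw [← hT]
      apply Finset.sum_congr rfl
      intro r _
      have : mono (fun _ => (1:ℝ)) r.1 = 1 := by simp [mono]
      rw [this, mul_one]
    set t : Finset (Fin n → ℕ) :=
      insert (0 : Fin n → ℕ) (Finset.univ.image (fun i => Pi.single i (k i))) with htdef
    have hmaps : ∀ r ∈ R, r.1 ∈ t := by
      intro r hr
      rcases hform r hr with ⟨a, b, hab, hre⟩ | ⟨a, hre⟩ | ⟨a, hre⟩
      · rw [htdef]
        exact Finset.mem_insert_of_mem (Finset.mem_image.mpr ⟨a, Finset.mem_univ a, by rw [hre]⟩)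
      · rw [htdef]
        exact Finset.mem_insert_of_mem (Finset.mem_image.mpr ⟨a, Finset.mem_univ a, by rw [hre]⟩)
      · rw [htdef, hre]; exact Finset.mem_insert_self _ _
    rw [← Finset.sum_fiberwise_of_maps_to hmaps (fun r => d r • (toR r.2 - toR r.1))] at hT'
    rw [htdef, Finset.sum_insert (by
      simp only [Finset.mem_image, not_exists]
      intro a
      intro h
      exact single_k_ne_zero k hk a h.2)] at hT'
    have hrest : ∑ y ∈ Finset.univ.image (fun i => Pi.single i (k i)),
        ∑ r ∈ R.filter (fun r => r.1 = y), d r • (toR r.2 - toR r.1) = 0 := by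
      apply Finset.sum_eq_zero
      intro y hy
      rcases Finset.mem_image.mp hy with ⟨a, _, ha⟩
      rw [← ha]
      exact hSi a
    rw [hrest, add_zero] at hT'
    exact hT'
  -- reactions whose target is kⱼeⱼ have d r = 0
  have hdj : ∀ r ∈ R, (∃ j, r.2 = Pi.single j (k j)) → d r = 0 := by
    rintro r hr ⟨j, hr2⟩
    have hr1j : r.1 j = 0 := by
      rcases hform r hr with ⟨a, b, hab, hre⟩ | ⟨a, hre⟩ | ⟨a, hre⟩
      · have hb : r.2 = Pi.single b (k b) := by rw [hre]
        have hbj : b = j := single_k_inj k hk (hb.symm.trans hr2)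
        have h1 : r.1 = Pi.single a (k a) := by rw [hre]
        rw [h1]
        exact Pi.single_eq_of_ne (by rw [← hbj]; exact fun h => hab h.symm) _
      · exfalso
        have : r.2 = (0 : Fin n → ℕ) := by rw [hre]
        exact single_k_ne_zero k hk j (hr2.symm.trans this)
      · have h1 : r.1 = (0 : Fin n → ℕ) := by rw [hre]
        rw [h1]; rfl
    have hSvec : ∑ r' ∈ R.filter (fun r' => r'.1 = r.1), d r' • (toR r'.2 - toR r'.1)
        = 0 := by
      rcases hform r hr with ⟨a, b, hab, hre⟩ | ⟨a, hre⟩ | ⟨a, hre⟩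
      · have h1 : r.1 = Pi.single a (k a) := by rw [hre]
        rw [h1]; exact hSi a
      · have h1 : r.1 = Pi.single a (k a) := by rw [hre]
        rw [h1]; exact hSi a
      · have h1 : r.1 = (0 : Fin n → ℕ) := by rw [hre]
        rw [h1]; exact hS0
    have hcoord := congrFun hSvec j
    simp only [Finset.sum_apply, Pi.smul_apply, Pi.sub_apply, Pi.zero_apply,
      smul_eq_mul] at hcoord
    have hrmem : r ∈ R.filter (fun r' => r'.1 = r.1) := Finset.mem_filter.mpr ⟨hr, rfl⟩
    rw [Finset.sum_eq_single_of_mem r hrmem] at hcoord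
    · have hval : toR r.2 j - toR r.1 j = (k j : ℝ) := by
        rw [hr2]
        simp [toR, hr1j, Pi.single_eq_same]
      rw [hval] at hcoord
      have hkj : (k j : ℝ) ≠ 0 := by
        have := hk j; exact_mod_cast (by omega : k j ≠ 0)
      exact (mul_eq_zero.mp hcoord).resolve_right hkj
    · intro r' hr' hne
      rw [Finset.mem_filter] at hr'
      have hr'1j : r'.1 j = 0 := by rw [hr'.2]; exact hr1j
      have hr'2j : r'.2 j = 0 := by
        rcases hform r' hr'.1 with ⟨a, b, hab, hre⟩ | ⟨a, hre⟩ | ⟨a, hre⟩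
        · have hb : r'.2 = Pi.single b (k b) := by rw [hre]
          rcases eq_or_ne b j with hbj | hbj
          · exfalso
            apply hne
            have : r'.2 = r.2 := by rw [hb, hbj, ← hr2]
            exact Prod.ext hr'.2 this
          · rw [hb]; exact Pi.single_eq_of_ne (fun h => hbj h.symm) _
        · have : r'.2 = (0 : Fin n → ℕ) := by rw [hre]
          rw [this]; rfl
        · have hb : r'.2 = Pi.single a (k a) := by rw [hre]
          rcases eq_or_ne a j with hbj | hbj
          · exfalso
            apply hne
            have : r'.2 = r.2 := by rw [hb, hbj, ← hr2]
            exact Prod.ext hr'.2 this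
          · rw [hb]; exact Pi.single_eq_of_ne (fun h => hbj h.symm) _
      simp [toR, hr'1j, hr'2j]
  -- reactions whose target is 0 have d r = 0
  have hd0 : ∀ r ∈ R, r.2 = (0 : Fin n → ℕ) → d r = 0 := by
    intro r hr hr2
    obtain ⟨i, hre⟩ : ∃ i, r = (Pi.single i (k i), (0 : Fin n → ℕ)) := by
      rcases hform r hr with ⟨a, b, hab, hre⟩ | ⟨a, hre⟩ | ⟨a, hre⟩
      · exfalso
        have : r.2 = Pi.single b (k b) := by rw [hre]
        exact single_k_ne_zero k hk b (this.symm.trans hr2)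
      · exact ⟨a, hre⟩
      · exfalso
        have : r.2 = Pi.single a (k a) := by rw [hre]
        exact single_k_ne_zero k hk a (this.symm.trans hr2)
    have h1 : r.1 = Pi.single i (k i) := by rw [hre]
    have hcoord := congrFun (hSi i) i
    simp only [Finset.sum_apply, Pi.smul_apply, Pi.sub_apply, Pi.zero_apply,
      smul_eq_mul] at hcoord
    have hrmem : r ∈ R.filter (fun r' => r'.1 = Pi.single i (k i)) :=
      Finset.mem_filter.mpr ⟨hr, h1⟩
    rw [Finset.sum_eq_single_of_mem r hrmem] at hcoord
    · have hval : toR r.2 i - toR r.1 i = -(k i : ℝ) := by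
        rw [hr2, h1]
        simp [toR, Pi.single_eq_same]
      rw [hval] at hcoord
      have hki : (k i : ℝ) ≠ 0 := by
        have := hk i; exact_mod_cast (by omega : k i ≠ 0)
      have := mul_eq_zero.mp hcoord
      rcases this with h | h
      · exact h
      · exact absurd h (by simpa using hki)
    · intro r' hr' hne
      rw [Finset.mem_filter] at hr'
      have : d r' = 0 := by
        apply hdj r' hr'.1
        rcases hform r' hr'.1 with ⟨a, b, hab, hre'⟩ | ⟨a, hre'⟩ | ⟨a, hre'⟩
        · exact ⟨b, by rw [hre']⟩
        · exfalso
          apply hne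
          have h2' : r'.2 = (0 : Fin n → ℕ) := by rw [hre']
          have h1' : r'.1 = r.1 := by rw [hr'.2, h1]
          exact Prod.ext h1' (by rw [h2', hr2])
        · exfalso
          have h1' : r'.1 = (0 : Fin n → ℕ) := by rw [hre']
          exact single_k_ne_zero k hk i (hr'.2.symm.trans h1')
      rw [this, zero_mul]
  -- conclude
  intro r hr
  have : d r = 0 := by
    rcases hform r hr with ⟨a, b, hab, hre⟩ | ⟨a, hre⟩ | ⟨a, hre⟩
    · exact hdj r hr ⟨b, by rw [hre]⟩
    · exact hd0 r hr (by rw [hre])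
    · exact hdj r hr ⟨a, by rw [hre]⟩
  exact sub_eq_zero.mp this
end

section
/- Let R be a reaction network on n species in which distinct reactions have distinct source complexes (i.e. the map (y, y') ↦ y is injective on R). Then the map κ ↦ A_{R,κ}|_{ℝ^n_{>0}}, from positive rate vectors on R to functions ℝ^n_{>0} → ℝ^n, is injective; i.e. R is reaction-identifiable w.r.t. its ODE. -/
open Finset

/-- Base-`B` representations with digits `< B` are unique. -/
lemma base_rep_inj : ∀ (n B : ℕ) (y z : Fin n → ℕ), (∀ i, y i < B) → (∀ i, z i < B) →
    ∑ i, y i * B ^ (i : ℕ) = ∑ i, z i * B ^ (i : ℕ) → y = z := by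
  intro n
  induction n with
  | zero =>
    intro B y z _ _ _
    funext i
    exact absurd i.2 (by omega)
  | succ n ih =>
    intro B y z hy hz h
    have hB : 0 < B := lt_of_le_of_lt (Nat.zero_le _) (hy 0)
    rw [Fin.sum_univ_succ, Fin.sum_univ_succ] at h
    have key : ∀ (w : Fin (n+1) → ℕ), ∑ i : Fin n, w i.succ * B ^ ((i.succ : Fin (n+1)) : ℕ)
        = B * ∑ i : Fin n, w i.succ * B ^ (i : ℕ) := by
      intro w
      rw [Finset.mul_sum]
      refine Finset.sum_congr rfl (fun i _ => ?_)
      have : ((i.succ : Fin (n+1)) : ℕ) = (i : ℕ) + 1 := rfl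
      rw [this]; ring
    rw [key y, key z] at h
    simp only [Fin.val_zero, pow_zero, mul_one] at h
    have h0 : y 0 = z 0 := by
      have := congrArg (· % B) h
      simpa [Nat.add_mul_mod_self_left, Nat.mod_eq_of_lt (hy 0), Nat.mod_eq_of_lt (hz 0)]
        using this
    have h1 : ∑ i : Fin n, y i.succ * B ^ (i : ℕ) = ∑ i : Fin n, z i.succ * B ^ (i : ℕ) := by
      rw [h0] at h
      exact Nat.eq_of_mul_eq_mul_left hB (by omega)
    have htail := ih B (fun i => y i.succ) (fun i => z i.succ) (fun i => hy _) (fun i => hz _) h1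
    funext i
    induction i using Fin.cases with
    | zero => exact h0
    | succ i => exact congrFun htail i

/-- If distinct reactions of a network have distinct source complexes, then the network is
reaction-identifiable w.r.t. its ODE: the positive rate vector is determined by the drift on
the positive orthant. -/
theorem distinct_sources_ode_identifiable {n : ℕ} (R : Finset (Rxn n))
    (hR : ∀ r ∈ R, r.1 ≠ r.2)
    (hinj : ∀ r ∈ R, ∀ r' ∈ R, r.1 = r'.1 → r = r') :
    ∀ κ κ' : Rxn n → ℝ, (∀ r ∈ R, 0 < κ r) → (∀ r ∈ R, 0 < κ' r) →
      (∀ x ∈ posOrth n, drift R κ x = drift R κ' x) → ∀ r ∈ R, κ r = κ' r := by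
  intro κ κ' hκ hκ' heq r0 hr0
  -- pick a coordinate where the reaction vector is nonzero
  obtain ⟨j, hj⟩ : ∃ j, r0.1 j ≠ r0.2 j := Function.ne_iff.mp (hR r0 hr0)
  have hd : ((r0.2 j : ℝ) - (r0.1 j : ℝ)) ≠ 0 := by
    rw [sub_ne_zero]
    exact fun h => hj (Nat.cast_injective h).symm
  -- base for encoding exponent vectors
  set B : ℕ := 1 + R.sup (fun r => Finset.univ.sup r.1) with hBdef
  have hBlt : ∀ r ∈ R, ∀ i, r.1 i < B := by
    intro r hr i
    have h1 : r.1 i ≤ Finset.univ.sup r.1 := Finset.le_sup (Finset.mem_univ i)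
    have h2 : Finset.univ.sup r.1 ≤ R.sup (fun r => Finset.univ.sup r.1) :=
      Finset.le_sup (f := fun r : Rxn n => Finset.univ.sup r.1) hr
    omega
  set N : Rxn n → ℕ := fun r => ∑ i, r.1 i * B ^ (i : ℕ) with hNdef
  set c : Rxn n → ℝ := fun r => (κ r - κ' r) * ((r.2 j : ℝ) - (r.1 j : ℝ)) with hcdef
  -- the one-variable equation
  have hscalar : ∀ t : ℝ, 0 < t → ∑ r ∈ R, c r * t ^ N r = 0 := by
    intro t ht
    set x : Fin n → ℝ := fun i => t ^ (B ^ (i : ℕ)) with hxdef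
    have hx : x ∈ posOrth n := fun i => pow_pos ht _
    have hmono : ∀ r : Rxn n, mono x r.1 = t ^ N r := by
      intro r
      have : ∀ i : Fin n, x i ^ r.1 i = t ^ (r.1 i * B ^ (i : ℕ)) := by
        intro i
        rw [hxdef]
        rw [← pow_mul, mul_comm]
      unfold mono
      rw [Finset.prod_congr rfl (fun i _ => this i), hNdef]
      exact Finset.prod_pow_eq_pow_sum _ _ _
    have h := congrFun (heq x hx) j
    unfold drift at h
    rw [Finset.sum_apply, Finset.sum_apply] at h
    have hterm : ∀ (κ₀ : Rxn n → ℝ) (r : Rxn n),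
        ((κ₀ r * mono x r.1) • (toR r.2 - toR r.1)) j
          = κ₀ r * t ^ N r * ((r.2 j : ℝ) - (r.1 j : ℝ)) := by
      intro κ₀ r
      simp only [Pi.smul_apply, Pi.sub_apply, toR, smul_eq_mul, hmono r]
    rw [Finset.sum_congr rfl (fun r _ => hterm κ r),
        Finset.sum_congr rfl (fun r _ => hterm κ' r)] at h
    have : ∑ r ∈ R, c r * t ^ N r
        = (∑ r ∈ R, κ r * t ^ N r * ((r.2 j : ℝ) - (r.1 j : ℝ)))
          - ∑ r ∈ R, κ' r * t ^ N r * ((r.2 j : ℝ) - (r.1 j : ℝ)) := by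
      rw [← Finset.sum_sub_distrib]
      refine Finset.sum_congr rfl (fun r _ => ?_)
      rw [hcdef]; ring
    rw [this, h, sub_self]
  -- package as a polynomial
  set P : Polynomial ℝ := ∑ r ∈ R, Polynomial.C (c r) * Polynomial.X ^ N r with hPdef
  have hPeval : ∀ t ∈ Set.Ioi (0:ℝ), P.IsRoot t := by
    intro t ht
    have := hscalar t ht
    simp only [Polynomial.IsRoot, hPdef, Polynomial.eval_finset_sum, Polynomial.eval_mul,
      Polynomial.eval_C, Polynomial.eval_pow, Polynomial.eval_X]
    exact this
  have hP0 : P = 0 := by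
    refine Polynomial.eq_zero_of_infinite_isRoot P ?_
    exact Set.Infinite.mono (fun t ht => hPeval t ht) (Set.Ioi_infinite 0)
  -- extract the coefficient at N r0
  have hNinj : ∀ r ∈ R, N r = N r0 → r = r0 := by
    intro r hr hN
    refine hinj r hr r0 hr0 ?_
    exact base_rep_inj n B r.1 r0.1 (hBlt r hr) (hBlt r0 hr0) hN
  have hcoeff : P.coeff (N r0) = c r0 := by
    rw [hPdef, Polynomial.finset_sum_coeff]
    rw [Finset.sum_eq_single r0]
    · simp [Polynomial.coeff_C_mul, Polynomial.coeff_X_pow]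
    · intro r hr hne
      have hne' : N r ≠ N r0 := fun h => hne (hNinj r hr h)
      rw [Polynomial.coeff_C_mul, Polynomial.coeff_X_pow, if_neg (fun h => hne' h.symm), mul_zero]
    · intro h; exact absurd hr0 h
  rw [hP0] at hcoeff
  simp only [Polynomial.coeff_zero] at hcoeff
  have : κ r0 - κ' r0 = 0 := by
    rcases mul_eq_zero.mp hcoeff.symm with h | h
    · exact h
    · exact absurd h hd
  linarith
end

section
/- Let n = 1 and let R be the reaction network with the four reactions (0,2), (0,1), (1,0), (0,3) (i.e. ∅ → 2S, ∅ → S, S → ∅, ∅ → 3S). Let κ assign these reactions the rates 1, 4, 1, 2 and let κ' assign them the rates 4, 1, 1, 1. Then κ ≠ κ', and for all s ∈ ℝ: A_{R,κ}(s) = A_{R,κ'}(s) = 12 − s and B_{R,κ}(s) = B_{R,κ'}(s) = s + 26; in particular R is not reaction-identifiable w.r.t. its generator. -/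
open Finset

/-- The one-species network `∅ → 2S, ∅ → S, S → ∅, ∅ → 3S`. -/
def Rex1 : Finset (ℕ × ℕ) := {(0, 2), (0, 1), (1, 0), (0, 3)}

/-- Rates `1, 4, 1, 2` for the four reactions of `Rex1`. -/
noncomputable def kex1 : ℕ × ℕ → ℝ := fun r =>
  if r = (0, 2) then 1 else if r = (0, 1) then 4 else if r = (1, 0) then 1 else 2

/-- Rates `4, 1, 1, 1` for the four reactions of `Rex1`. -/
noncomputable def kex1' : ℕ × ℕ → ℝ := fun r =>
  if r = (0, 2) then 4 else if r = (0, 1) then 1 else if r = (1, 0) then 1 else 1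

/-- The rates `(1,4,1,2)` and `(4,1,1,1)` differ on `Rex1`, yet both give drift `12 - s` and
diffusion coefficient `s + 26`; in particular `Rex1` is not reaction-identifiable w.r.t. its
generator. -/
theorem counterexample_one_species :
    (∃ r ∈ Rex1, kex1 r ≠ kex1' r) ∧
    (∀ s : ℝ, drift1 Rex1 kex1 s = 12 - s ∧ drift1 Rex1 kex1' s = 12 - s ∧
      diff1 Rex1 kex1 s = s + 26 ∧ diff1 Rex1 kex1' s = s + 26) ∧
    ¬ (∀ κ κ' : ℕ × ℕ → ℝ, (∀ r ∈ Rex1, 0 < κ r) → (∀ r ∈ Rex1, 0 < κ' r) →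
        (∃ r ∈ Rex1, κ r ≠ κ' r) →
        ∃ s : ℝ, 0 < s ∧
          (drift1 Rex1 κ s, diff1 Rex1 κ s) ≠ (drift1 Rex1 κ' s, diff1 Rex1 κ' s)) := by

  have hsum : ∀ κ : ℕ × ℕ → ℝ, ∀ f : ℕ × ℕ → ℝ,
      ∑ r ∈ Rex1, f r = f (0,2) + f (0,1) + f (1,0) + f (0,3) := by
    intro κ f
    simp [Rex1, Finset.sum_insert, Finset.mem_insert]
    ring
  have key : ∀ s : ℝ, drift1 Rex1 kex1 s = 12 - s ∧ drift1 Rex1 kex1' s = 12 - s ∧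
      diff1 Rex1 kex1 s = s + 26 ∧ diff1 Rex1 kex1' s = s + 26 := by
    intro s
    refine ⟨?_, ?_, ?_, ?_⟩ <;>
      simp [drift1, diff1, Rex1, kex1, kex1', Finset.sum_insert] <;> ring
  refine ⟨⟨(0,2), by simp [Rex1], by norm_num [kex1, kex1']⟩, key, ?_⟩
  intro h
  obtain ⟨s, hs, hne⟩ := h kex1 kex1'
    (by intro r hr; fin_cases hr <;> norm_num [kex1])
    (by intro r hr; fin_cases hr <;> norm_num [kex1'])
    ⟨(0,2), by simp [Rex1], by norm_num [kex1, kex1']⟩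
  exact hne (by rw [(key s).1, (key s).2.1, (key s).2.2.1, (key s).2.2.2])
end

section
/- Let n = 1, let R₁ be the reaction network with reactions (0,1), (0,4), (1,0) (i.e. ∅ → S, ∅ → 4S, S → ∅) with rates 5, 1, 1 respectively, and let R₂ be the reaction network with reactions (0,2), (0,3), (1,0) (i.e. ∅ → 2S, ∅ → 3S, S → ∅) with rates 3, 1, 1 respectively. Then R₁ ≠ R₂, and for all s ∈ ℝ both systems have drift 9 − s and diffusion coefficient s + 21; in particular R₁ and R₂ are confoundable w.r.t. their generators. -/
open Finset

/-- The one-species network `∅ → S, ∅ → 4S, S → ∅`. -/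
def Rc1 : Finset (ℕ × ℕ) := {(0, 1), (0, 4), (1, 0)}

/-- The one-species network `∅ → 2S, ∅ → 3S, S → ∅`. -/
def Rc2 : Finset (ℕ × ℕ) := {(0, 2), (0, 3), (1, 0)}

/-- Rates `5, 1, 1` for the reactions of `Rc1`. -/
noncomputable def kc1 : ℕ × ℕ → ℝ := fun r => if r = (0, 1) then 5 else 1

/-- Rates `3, 1, 1` for the reactions of `Rc2`. -/
noncomputable def kc2 : ℕ × ℕ → ℝ := fun r => if r = (0, 2) then 3 else 1

/-- `Rc1 ≠ Rc2`, yet both systems have drift `9 - s` and diffusion coefficient `s + 21`;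
in particular `Rc1` and `Rc2` are confoundable w.r.t. their generators. -/
theorem confoundable_example :
    Rc1 ≠ Rc2 ∧
    (∀ s : ℝ, drift1 Rc1 kc1 s = 9 - s ∧ drift1 Rc2 kc2 s = 9 - s ∧
      diff1 Rc1 kc1 s = s + 21 ∧ diff1 Rc2 kc2 s = s + 21) ∧
    (∃ κ κ' : ℕ × ℕ → ℝ, (∀ r ∈ Rc1, 0 < κ r) ∧ (∀ r ∈ Rc2, 0 < κ' r) ∧
      ∀ s : ℝ, 0 < s →
        drift1 Rc1 κ s = drift1 Rc2 κ' s ∧ diff1 Rc1 κ s = diff1 Rc2 κ' s) := by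
  have hdecomp : ∀ s : ℝ, drift1 Rc1 kc1 s = 9 - s ∧ drift1 Rc2 kc2 s = 9 - s ∧
      diff1 Rc1 kc1 s = s + 21 ∧ diff1 Rc2 kc2 s = s + 21 := by
    intro s
    refine ⟨?_, ?_, ?_, ?_⟩ <;>
      simp [drift1, diff1, Rc1, Rc2, kc1, kc2, Finset.sum_insert, Prod.ext_iff] <;> ring
  refine ⟨by decide, hdecomp, kc1, kc2, ?_, ?_, fun s _ => ?_⟩
  · intro r hr
    fin_cases hr <;> norm_num [kc1]
  · intro r hr
    fin_cases hr <;> norm_num [kc2]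
  · obtain ⟨h1, h2, h3, h4⟩ := hdecomp s
    exact ⟨h1.trans h2.symm, h3.trans h4.symm⟩
end

section
/- Let R be a reaction network on n species with a single source complex y and d reactions (y, y'_1), …, (y, y'_d) with pairwise distinct product complexes y'_r (each y'_r ≠ y). Then the map κ ↦ A_{R,κ}|_{ℝ^n_{>0}}, from positive rate vectors on R to functions ℝ^n_{>0} → ℝ^n, is injective if and only if the vectors y'_1 − y, …, y'_d − y are linearly independent in ℝ^n, equivalently if and only if the deficiency (d + 1) − 1 − dim span{y'_1 − y, …, y'_d − y} of R equals zero. -/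
open Finset

/-- For a reaction network with a single source complex `y` and `d` reactions with pairwise
distinct products `y'_r`, reaction-identifiability w.r.t. the ODE is equivalent to linear
independence of the reaction vectors `y'_r - y`, equivalently to the deficiency
`(d + 1) - 1 - dim span{y'_r - y}` being zero. -/
theorem single_source_identifiable_iff_deficiency_zero {n d : ℕ}
    (y : Fin n → ℕ) (y' : Fin d → (Fin n → ℕ))
    (hinj : Function.Injective y') (hne : ∀ r, y' r ≠ y)
    (R : Finset (Rxn n)) (hRdef : R = Finset.univ.image (fun r : Fin d => (y, y' r))) :
    ((∀ κ κ' : Rxn n → ℝ, (∀ r ∈ R, 0 < κ r) → (∀ r ∈ R, 0 < κ' r) →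
        (∀ x ∈ posOrth n, drift R κ x = drift R κ' x) → ∀ r ∈ R, κ r = κ' r)
      ↔ LinearIndependent ℝ (fun r : Fin d => toR (y' r) - toR y))
    ∧
    ((∀ κ κ' : Rxn n → ℝ, (∀ r ∈ R, 0 < κ r) → (∀ r ∈ R, 0 < κ' r) →
        (∀ x ∈ posOrth n, drift R κ x = drift R κ' x) → ∀ r ∈ R, κ r = κ' r)
      ↔ (d + 1) - 1 -
          Module.finrank ℝ
            (Submodule.span ℝ (Set.range (fun r : Fin d => toR (y' r) - toR y))) = 0) := by
  set v : Fin d → (Fin n → ℝ) := fun r => toR (y' r) - toR y with hv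
  set e : Fin d → Rxn n := fun r => (y, y' r) with he
  have heinj : Function.Injective e := fun a b hab => hinj (congrArg Prod.snd hab)
  have hmem : ∀ r : Fin d, e r ∈ R := by
    intro r; rw [hRdef]; exact Finset.mem_image_of_mem _ (Finset.mem_univ r)
  have hdrift : ∀ (κ : Rxn n → ℝ) (x : Fin n → ℝ),
      drift R κ x = ∑ r : Fin d, (κ (e r) * mono x y) • v r := by
    intro κ x
    rw [drift, hRdef, Finset.sum_image (fun a _ b _ h => heinj h)]
  have hone : (fun _ : Fin n => (1:ℝ)) ∈ posOrth n := fun i => one_pos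
  have hmono1 : mono (fun _ : Fin n => (1:ℝ)) y = 1 := by
    simp [mono]
  have key : (∀ κ κ' : Rxn n → ℝ, (∀ r ∈ R, 0 < κ r) → (∀ r ∈ R, 0 < κ' r) →
        (∀ x ∈ posOrth n, drift R κ x = drift R κ' x) → ∀ r ∈ R, κ r = κ' r)
      ↔ LinearIndependent ℝ v := by
    constructor
    · intro hid
      rw [Fintype.linearIndependent_iff]
      by_contra hcon
      push_neg at hcon
      obtain ⟨g, hg0, i, hgi⟩ := hcon
      set M : ℝ := 1 + ∑ r : Fin d, |g r| with hM
      have hsum_le : ∀ r : Fin d, |g r| ≤ ∑ s : Fin d, |g s| := fun r =>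
        Finset.single_le_sum (fun s _ => abs_nonneg (g s)) (Finset.mem_univ r)
      have hMpos : (0:ℝ) < M := by
        have : (0:ℝ) ≤ ∑ s : Fin d, |g s| :=
          Finset.sum_nonneg (fun s _ => abs_nonneg (g s))
        linarith
      set gg : Rxn n → ℝ := fun p => if h : ∃ r : Fin d, p = e r then g h.choose else 0
        with hgg
      have hgg_e : ∀ r : Fin d, gg (e r) = g r := by
        intro r
        have h : ∃ s : Fin d, e r = e s := ⟨r, rfl⟩
        have : h.choose = r := heinj h.choose_spec.symm
        simp [hgg, dif_pos h, this]
      set κ : Rxn n → ℝ := fun _ => M with hκ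
      set κ' : Rxn n → ℝ := fun p => M + gg p with hκ'
      have hκpos : ∀ r ∈ R, 0 < κ r := fun r _ => hMpos
      have hκ'pos : ∀ r ∈ R, 0 < κ' r := by
        intro p hp
        rw [hRdef] at hp
        obtain ⟨r, -, rfl⟩ := Finset.mem_image.mp hp
        have : -(∑ s : Fin d, |g s|) ≤ g r := by
          have := hsum_le r
          have := neg_abs_le (g r)
          linarith
        simp only [hκ', hgg_e]
        linarith
      have heq : ∀ x ∈ posOrth n, drift R κ x = drift R κ' x := by
        intro x hx
        rw [hdrift, hdrift]
        have : ∑ r : Fin d, (κ' (e r) * mono x y) • v r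
            = ∑ r : Fin d, ((κ (e r) * mono x y) • v r + (mono x y * g r) • v r) := by
          apply Finset.sum_congr rfl
          intro r _
          rw [← add_smul]
          congr 1
          simp only [hκ', hκ, hgg_e]
          ring
        rw [this, Finset.sum_add_distrib]
        have hz : ∑ r : Fin d, (mono x y * g r) • v r = 0 := by
          have : ∑ r : Fin d, (mono x y * g r) • v r
              = mono x y • ∑ r : Fin d, g r • v r := by
            rw [Finset.smul_sum]
            exact Finset.sum_congr rfl (fun r _ => by rw [mul_smul])
          rw [this, hg0, smul_zero]
        rw [hz, add_zero]
      have := hid κ κ' hκpos hκ'pos heq (e i) (hmem i)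
      simp only [hκ, hκ', hgg_e] at this
      exact hgi (by linarith)
    · intro hli κ κ' hκ hκ' heq r hr
      have h1 := heq _ hone
      rw [hdrift, hdrift] at h1
      simp only [hmono1, mul_one] at h1
      have hz : ∑ s : Fin d, (κ (e s) - κ' (e s)) • v s = 0 := by
        have : ∑ s : Fin d, (κ (e s) - κ' (e s)) • v s
            = ∑ s : Fin d, κ (e s) • v s - ∑ s : Fin d, κ' (e s) • v s := by
          rw [← Finset.sum_sub_distrib]
          exact Finset.sum_congr rfl (fun s _ => by rw [sub_smul])
        rw [this, h1, sub_self]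
      have := Fintype.linearIndependent_iff.mp hli _ hz
      rw [hRdef] at hr
      obtain ⟨s, -, rfl⟩ := Finset.mem_image.mp hr
      have := this s
      linarith
  refine ⟨key, key.trans ?_⟩
  have hle : Module.finrank ℝ (Submodule.span ℝ (Set.range v)) ≤ d := by
    simpa [Set.finrank] using finrank_range_le_card v
  rw [linearIndependent_iff_card_eq_finrank_span]
  simp only [Fintype.card_fin]
  unfold Set.finrank
  omega
end
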